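/- arXiv:1109.3381 — 2 statements merged into one kernel-verified Lean document; each statement's English description precedes it below -/
import Mathlib

section
/- For every n ≥ 2 there exists a DFA M over an alphabet with 2n−1 letters, with state type Fin n, such that: every state is reachable from the start state by some word; any two distinct states are distinguishable (for distinct states p, q there is a word w such that exactly one of M.evalFrom p w and M.evalFrom q w is accepting); for every word w the transformation q ↦ M.evalFrom q w is aperiodic; and the set { f : Fin n → Fin n | ∃ w ≠ [], f = fun q => M.evalFrom q w } has cardinality exactly (∑_{k=0}^{n−1} C(n−1,k)·C(n+k−2,k)) + n − 1. -/
namespace NMD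

variable (n : ℕ)

/-- clamped element constructor -/
def mk (hn : 2 ≤ n) (v : ℕ) : Fin n := ⟨min v (n-1), by omega⟩

variable (hn : 2 ≤ n)

@[simp] lemma mk_val (v : ℕ) : (mk n hn v).val = min v (n-1) := rfl

/-- the sink state -/
def sk : Fin n := mk n hn (n-1)

@[simp] lemma sk_val : (sk n hn).val = n - 1 := by simp [sk]

def stepf (q : Fin n) (c : Fin (2*n-1)) : Fin n :=
  if c.val = 0 then q
  else if c.val = 1 then mk n hn 0
  else if c.val = 2 then mk n hn (q.val + 1)
  else if c.val ≤ n then (if q.val = c.val - 2 then mk n hn (c.val - 3) else q)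
  else (if q.val = c.val - (n+1) then sk n hn else q)

def M : DFA (Fin (2*n-1)) (Fin n) := ⟨stepf n hn, mk n hn 0, {sk n hn}⟩

-- letter functions
def uf (q : Fin n) : Fin n := mk n hn (q.val + 1)
def af (i : ℕ) (q : Fin n) : Fin n := if q.val = i + 1 then mk n hn i else q
def ef (i : ℕ) (q : Fin n) : Fin n := if q.val = i then sk n hn else q
def bf (i : ℕ) (q : Fin n) : Fin n := if q.val = i then mk n hn (i+1) else q
def Af (i : ℕ) (q : Fin n) : Fin n := if 1 ≤ q.val ∧ q.val ≤ i then mk n hn (q.val - 1) else q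
def Uf (i : ℕ) (q : Fin n) : Fin n := if i < q.val ∧ q.val ≤ n - 2 then mk n hn (q.val - 1) else q

/-- the set of transformations of non-empty words -/
def Gen (f : Fin n → Fin n) : Prop :=
  ∃ w : List (Fin (2*n-1)), w ≠ [] ∧ f = fun q => (M n hn).evalFrom q w

lemma eval_cons (q : Fin n) (c : Fin (2*n-1)) (w : List (Fin (2*n-1))) :
    (M n hn).evalFrom q (c :: w) = (M n hn).evalFrom (stepf n hn q c) w := rfl

lemma eval_append (q : Fin n) (w₁ w₂ : List (Fin (2*n-1))) :
    (M n hn).evalFrom q (w₁ ++ w₂) = (M n hn).evalFrom ((M n hn).evalFrom q w₁) w₂ :=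
  List.foldl_append ..

lemma gen_comp {f g : Fin n → Fin n} (hf : Gen n hn f) (hg : Gen n hn g) :
    Gen n hn (fun q => g (f q)) := by
  obtain ⟨w₁, h₁, rfl⟩ := hf
  obtain ⟨w₂, h₂, rfl⟩ := hg
  exact ⟨w₁ ++ w₂, by simp [h₁], by funext q; rw [eval_append]⟩

lemma gen_letter (c : Fin (2*n-1)) : Gen n hn (fun q => stepf n hn q c) :=
  ⟨[c], by simp, rfl⟩

include hn in
lemma two_n_pos : 0 < 2*n-1 := by omega

lemma gen_of_eq {f g : Fin n → Fin n} (h : Gen n hn f) (hfg : f = g) : Gen n hn g := hfg ▸ h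

lemma gen_id : Gen n hn (id : Fin n → Fin n) := by
  refine gen_of_eq n hn (gen_letter n hn ⟨0, two_n_pos n hn⟩) ?_
  funext q; simp [stepf]

lemma gen_uf : Gen n hn (uf n hn) := by
  refine gen_of_eq n hn (gen_letter n hn ⟨2, by have := hn; omega⟩) ?_
  funext q; simp [stepf, uf]

lemma gen_af (i : ℕ) (h : i + 3 ≤ n) : Gen n hn (af n hn i) := by
  refine gen_of_eq n hn (gen_letter n hn ⟨i+3, by omega⟩) ?_
  funext q
  simp only [stepf, af]
  have h1 : ¬ (i+3 = 0) := by omega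
  have h2 : ¬ (i+3 = 1) := by omega
  have h3 : ¬ (i+3 = 2) := by omega
  have h5 : i+3-2 = i+1 := by omega
  have h6 : i+3-3 = i := by omega
  simp only [h1, h2, h3, if_false, if_pos h, h5, h6]

lemma gen_ef (i : ℕ) (h : i + 3 ≤ n) : Gen n hn (ef n hn i) := by
  refine gen_of_eq n hn (gen_letter n hn ⟨n+1+i, by omega⟩) ?_
  funext q
  simp only [stepf, ef]
  have h1 : ¬ (n+1+i = 0) := by omega
  have h2 : ¬ (n+1+i = 1) := by omega
  have h3 : ¬ (n+1+i = 2) := by omega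
  have h4 : ¬ (n+1+i ≤ n) := by omega
  have h5 : n+1+i-(n+1) = i := by omega
  simp only [h1, h2, h3, h4, if_false, h5]

lemma gen_const (v : ℕ) : Gen n hn (fun _ => mk n hn v) := by
  induction v with
  | zero =>
    refine gen_of_eq n hn (gen_letter n hn ⟨1, by have := hn; omega⟩) ?_
    funext q; simp [stepf]
  | succ v ih =>
    refine gen_of_eq n hn (gen_comp n hn ih (gen_uf n hn)) ?_
    funext q
    apply Fin.ext
    simp [uf]
    omega

lemma gen_constf (c : Fin n) : Gen n hn (fun _ => c) := by
  refine gen_of_eq n hn (gen_const n hn c.val) ?_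
  funext q
  apply Fin.ext
  have := c.isLt
  simp
  omega

lemma gen_Af : ∀ i, i ≤ n-2 → Gen n hn (Af n hn i) := by
  intro i
  induction i with
  | zero =>
    intro _
    refine gen_of_eq n hn (gen_id n hn) ?_
    funext q
    apply Fin.ext
    have hq := q.isLt
    simp only [Af, id_eq, apply_ite Fin.val, mk_val]
    split_ifs <;> omega
  | succ i ih =>
    intro hi
    refine gen_of_eq n hn (gen_comp n hn (ih (by omega)) (gen_af n hn i (by omega))) ?_
    funext q
    apply Fin.ext
    have hq := q.isLt
    have h2 := hn
    simp only [Af, af, apply_ite Fin.val, mk_val]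
    split_ifs <;> omega

lemma gen_Uf_aux : ∀ d i, i + d = n-2 → Gen n hn (Uf n hn i) := by
  intro d
  induction d with
  | zero =>
    intro i hi
    refine gen_of_eq n hn (gen_id n hn) ?_
    funext q
    apply Fin.ext
    have hq := q.isLt
    simp only [Uf, id_eq, apply_ite Fin.val, mk_val]
    split_ifs <;> omega
  | succ d ih =>
    intro i hi
    refine gen_of_eq n hn (gen_comp n hn (gen_af n hn i (by omega)) (ih (i+1) (by omega))) ?_
    funext q
    apply Fin.ext
    have hq := q.isLt
    have h2 := hn
    simp only [Uf, af, apply_ite Fin.val, mk_val]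
    split_ifs <;> omega

lemma gen_Uf (i : ℕ) (hi : i ≤ n-2) : Gen n hn (Uf n hn i) :=
  gen_Uf_aux n hn (n-2-i) i (by omega)

lemma gen_bf (i : ℕ) (hi : i ≤ n-2) : Gen n hn (bf n hn i) := by
  refine gen_of_eq n hn (gen_comp n hn (gen_comp n hn (gen_Uf n hn i hi) (gen_uf n hn))
    (gen_Af n hn i hi)) ?_
  funext q
  apply Fin.ext
  have hq := q.isLt
  have h2 := hn
  simp only [bf, Uf, uf, Af, apply_ite Fin.val, mk_val]
  split_ifs <;> omega

/-! ### The semigroup -/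

/-- sink-fixing partially monotonic maps -/
def Pm (f : Fin n → Fin n) : Prop :=
  f (sk n hn) = sk n hn ∧
  ∀ i j : Fin n, i.val ≤ j.val → f i ≠ sk n hn → f j ≠ sk n hn → (f i).val ≤ (f j).val

def Sset : Set (Fin n → Fin n) :=
  {f | Pm n hn f ∨ ∃ c : Fin n, c ≠ sk n hn ∧ f = fun _ => c}

lemma pm_comp {f g : Fin n → Fin n} (hf : Pm n hn f) (hg : Pm n hn g) :
    Pm n hn (fun q => g (f q)) := by
  obtain ⟨hf1, hf2⟩ := hf
  obtain ⟨hg1, hg2⟩ := hg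
  constructor
  · simp only [hf1, hg1]
  · intro i j hij hi hj
    simp only at hi hj ⊢
    have hfi : f i ≠ sk n hn := fun h => hi (by rw [h, hg1])
    have hfj : f j ≠ sk n hn := fun h => hj (by rw [h, hg1])
    exact hg2 _ _ (hf2 i j hij hfi hfj) hi hj

lemma sset_comp {f g : Fin n → Fin n} (hf : f ∈ Sset n hn) (hg : g ∈ Sset n hn) :
    (fun q => g (f q)) ∈ Sset n hn := by
  rcases hg with hg | ⟨c, hc, rfl⟩
  · rcases hf with hf | ⟨c, hc, rfl⟩
    · exact Or.inl (pm_comp n hn hf hg)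
    · by_cases h : g c = sk n hn
      · refine Or.inl ⟨h, ?_⟩
        intro i j _ hi hj
        simp only at hi
        exact absurd h hi
      · exact Or.inr ⟨g c, h, rfl⟩
  · exact Or.inr ⟨c, hc, rfl⟩

lemma letter_mem_sset (c : Fin (2*n-1)) : (fun q => stepf n hn q c) ∈ Sset n hn := by
  by_cases h1 : c.val = 1
  · refine Or.inr ⟨mk n hn 0, ?_, ?_⟩
    · intro h
      have := congrArg Fin.val h
      simp only [mk_val, sk_val] at this
      omega
    · funext q
      simp [stepf, h1]
  · refine Or.inl ⟨?_, ?_⟩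
    · apply Fin.ext
      have h2 := hn
      have hc := c.isLt
      simp only [stepf, apply_ite Fin.val, mk_val, sk_val]
      split_ifs <;> omega
    · intro i j hij hi hj
      have hi' : ((fun q => stepf n hn q c) i).val ≠ n-1 := by
        intro h
        exact hi (Fin.ext (by simpa using h))
      have hj' : ((fun q => stepf n hn q c) j).val ≠ n-1 := by
        intro h
        exact hj (Fin.ext (by simpa using h))
      have h2 := hn
      have hc := c.isLt
      have hiv := i.isLt
      have hjv := j.isLt
      simp only [stepf, apply_ite Fin.val, mk_val, sk_val] at hi' hj' ⊢
      split_ifs at hi' hj' ⊢ <;> omega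

lemma eval_mem_sset (w : List (Fin (2*n-1))) (hw : w ≠ []) :
    (fun q => (M n hn).evalFrom q w) ∈ Sset n hn := by
  induction w with
  | nil => exact absurd rfl hw
  | cons c w ih =>
    by_cases hw' : w = []
    · subst hw'
      exact letter_mem_sset n hn c
    · exact sset_comp n hn (letter_mem_sset n hn c) (ih hw')


/-! ### Aperiodicity -/

lemma pm_aperiodic {f : Fin n → Fin n} (hf : Pm n hn f) (x : Fin n) (k : ℕ)
    (hk : 1 ≤ k) (hit : f^[k] x = x) : f x = x := by
  obtain ⟨hs, hmono⟩ := hf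
  by_cases hxs : ∃ j, f^[j] x = sk n hn
  · -- the orbit hits the sink, hence x is the sink
    obtain ⟨j, hj⟩ := hxs
    have hmul : ∀ r, f^[k*r] x = x := by
      intro r
      induction r with
      | zero => rfl
      | succ r ih =>
        rw [Nat.mul_succ, Function.iterate_add_apply, hit, ih]
    have habs : ∀ t, f^[t + j] x = sk n hn := by
      intro t
      rw [Function.iterate_add_apply, hj]
      exact Function.iterate_fixed hs t
    have hxval : x = sk n hn := by
      have h1 : f^[k*(j+1)] x = x := hmul (j+1)
      have hj' : j + 1 ≤ k * (j+1) := Nat.le_mul_of_pos_left _ hk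
      have h2 : k*(j+1) = (k*(j+1) - j) + j := by omega
      rw [h2, habs] at h1
      exact h1.symm
    rw [hxval, hs]
  · push_neg at hxs
    have hchain_le : (f x).val ≤ x.val → ∀ j, (f^[j+1] x).val ≤ (f^[j] x).val := by
      intro hle j
      induction j with
      | zero => simpa using hle
      | succ j ih =>
        have h1 : f^[j+1+1] x = f (f^[j+1] x) := Function.iterate_succ_apply' f (j+1) x
        have h2 : f^[j+1] x = f (f^[j] x) := Function.iterate_succ_apply' f j x
        rw [h1]
        conv_rhs => rw [h2]
        exact hmono _ _ ih (h1 ▸ hxs (j+2)) (h2 ▸ hxs (j+1))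
    have hchain_ge : x.val ≤ (f x).val → ∀ j, (f^[j] x).val ≤ (f^[j+1] x).val := by
      intro hle j
      induction j with
      | zero => simpa using hle
      | succ j ih =>
        have h1 : f^[j+1+1] x = f (f^[j+1] x) := Function.iterate_succ_apply' f (j+1) x
        have h2 : f^[j+1] x = f (f^[j] x) := Function.iterate_succ_apply' f j x
        rw [h1]
        conv_lhs => rw [h2]
        exact hmono _ _ ih (h2 ▸ hxs (j+1)) (h1 ▸ hxs (j+2))
    rcases lt_trichotomy (f x).val x.val with hlt | heq | hgt
    · exfalso
      have hall : ∀ j, (f^[j+1] x).val ≤ (f x).val := by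
        intro j
        induction j with
        | zero => exact le_refl _
        | succ j ih => exact le_trans (hchain_le (le_of_lt hlt) (j+1)) ih
      obtain ⟨k', rfl⟩ : ∃ k', k = k' + 1 := ⟨k-1, by omega⟩
      have := hall k'
      rw [hit] at this
      omega
    · exact Fin.ext heq
    · exfalso
      have hall : ∀ j, (f x).val ≤ (f^[j+1] x).val := by
        intro j
        induction j with
        | zero => exact le_refl _
        | succ j ih => exact le_trans ih (hchain_ge (le_of_lt hgt) (j+1))
      obtain ⟨k', rfl⟩ : ∃ k', k = k' + 1 := ⟨k-1, by omega⟩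
      have := hall k'
      rw [hit] at this
      omega

lemma sset_aperiodic {f : Fin n → Fin n} (hf : f ∈ Sset n hn) (x : Fin n) (k : ℕ)
    (hk : 1 ≤ k) (hit : f^[k] x = x) : f x = x := by
  rcases hf with hf | ⟨c, _, rfl⟩
  · exact pm_aperiodic n hn hf x k hk hit
  · obtain ⟨k', rfl⟩ : ∃ k', k = k' + 1 := ⟨k-1, by omega⟩
    rw [Function.iterate_succ_apply] at hit
    have hx : x = c := by rw [← hit, Function.iterate_fixed rfl k']
    exact hx.symm


/-! ### Generation: monotone maps -/

def dst (f : Fin n → Fin n) (q : Fin n) : ℕ :=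
  ((f q).val - q.val) + (q.val - (f q).val)

def mea (f : Fin n → Fin n) : ℕ := ∑ q : Fin n, dst n f q

lemma mono_gen_aux : ∀ N (f : Fin n → Fin n), mea n f ≤ N →
    (∀ i j : Fin n, i.val ≤ j.val → (f i).val ≤ (f j).val) →
    f (sk n hn) = sk n hn → Gen n hn f := by
  intro N
  induction N with
  | zero =>
    intro f hμ _ _
    have hz : ∀ q ∈ Finset.univ, dst n f q = 0 :=
      (Finset.sum_eq_zero_iff).mp (Nat.le_zero.mp hμ)
    refine gen_of_eq n hn (gen_id n hn) ?_
    funext q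
    have := hz q (Finset.mem_univ q)
    simp only [dst] at this
    simp only [id_eq]
    exact (Fin.ext (by omega)).symm
  | succ N ih =>
    intro f hμ hm hs
    by_cases hsmall : mea n f ≤ N
    · exact ih f hsmall hm hs
    have hex : ∃ q : Fin n, f q ≠ q := by
      by_contra h
      push_neg at h
      have : mea n f = 0 := Finset.sum_eq_zero (fun q _ => by simp [dst, h q])
      omega
    by_cases hlt : ∃ x : Fin n, (f x).val < x.val
    · -- peel a merge `af v`
      set X := Finset.univ.filter (fun x : Fin n => (f x).val < x.val) with hX
      have hmem : ∀ y : Fin n, y ∈ X ↔ (f y).val < y.val := by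
        intro y
        simp only [hX, Finset.mem_filter, Finset.mem_univ, true_and]
      have hXne : X.Nonempty := by
        obtain ⟨x, hx⟩ := hlt
        exact ⟨x, (hmem x).mpr hx⟩
      set x₀ := X.max' hXne with hx₀def
      have hx₀ : (f x₀).val < x₀.val := (hmem x₀).mp (X.max'_mem hXne)
      have hmax : ∀ y : Fin n, (f y).val < y.val → y.val ≤ x₀.val :=
        fun y hy => X.le_max' y ((hmem y).mpr hy)
      have hx₀s : x₀.val ≤ n - 2 := by
        by_contra h
        have hx₀sk : x₀ = sk n hn := Fin.ext (by simp only [sk_val]; have := x₀.isLt; omega)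
        have h2 : f x₀ = sk n hn := by rw [hx₀sk, hs]
        have h3 := congrArg Fin.val h2
        have h4 := congrArg Fin.val hx₀sk
        simp only [sk_val] at h3 h4
        omega
      obtain ⟨v, hvdef⟩ : ∃ v, v = (f x₀).val := ⟨_, rfl⟩
      have hv : v ≤ n - 3 := by omega
      set f' := fun y : Fin n =>
        if (f y).val = v ∧ v < y.val then mk n hn (v+1) else f y with hf'
      have key1 : ∀ y : Fin n, ¬((f y).val = v ∧ v < y.val) → (f y).val ≠ v + 1 := by
        intro y hy hcon
        by_cases h : y.val ≤ x₀.val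
        · have := hm y x₀ h
          omega
        · have : ¬ ((f y).val < y.val) := fun hc => absurd (hmax y hc) (by omega)
          omega
      have heq : f = fun q => af n hn v (f' q) := by
        funext y
        by_cases hy : (f y).val = v ∧ v < y.val
        · simp only [hf', af, if_pos hy]
          rw [if_pos (by simp only [mk_val]; omega)]
          exact (Fin.ext (by simp only [mk_val]; omega)).symm
        · simp only [hf', af, if_neg hy]
          rw [if_neg (key1 y hy)]
      have hm' : ∀ i j : Fin n, i.val ≤ j.val → (f' i).val ≤ (f' j).val := by
        intro i j hij
        simp only [hf']
        have h1 := hm i j hij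
        by_cases hi : (f i).val = v ∧ v < i.val <;> by_cases hj : (f j).val = v ∧ v < j.val
        · rw [if_pos hi, if_pos hj]
        · rw [if_pos hi, if_neg hj]
          have h2 := key1 j hj
          simp only [mk_val]
          omega
        · rw [if_neg hi, if_pos hj]
          simp only [mk_val]
          omega
        · rw [if_neg hi, if_neg hj]
          exact h1
      have hs' : f' (sk n hn) = sk n hn := by
        simp only [hf']
        rw [if_neg (by rw [hs]; simp only [sk_val]; omega), hs]
      have hmea : mea n f' < mea n f := by
        apply Finset.sum_lt_sum
        · intro y _
          simp only [dst, hf']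
          by_cases hy : (f y).val = v ∧ v < y.val
          · rw [if_pos hy]; simp only [mk_val]; omega
          · rw [if_neg hy]
        · refine ⟨x₀, Finset.mem_univ _, ?_⟩
          simp only [dst, hf']
          rw [if_pos ⟨hvdef.symm, by omega⟩]
          simp only [mk_val]
          omega
      exact gen_of_eq n hn
        (gen_comp n hn (ih f' (by omega) hm' hs') (gen_af n hn v (by omega))) heq.symm
    · -- peel a raise `bf (v-1)`
      push_neg at hlt
      obtain ⟨x', hx'⟩ := hex
      have hgt : x'.val < (f x').val := by
        have h1 := hlt x'
        by_cases h : x'.val < (f x').val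
        · exact h
        · exact absurd (Fin.ext (by omega)) (Ne.symm hx')
      set X := Finset.univ.filter (fun x : Fin n => x.val < (f x).val) with hX
      have hmem : ∀ y : Fin n, y ∈ X ↔ y.val < (f y).val := by
        intro y
        simp only [hX, Finset.mem_filter, Finset.mem_univ, true_and]
      have hXne : X.Nonempty := ⟨x', (hmem x').mpr hgt⟩
      set x₁ := X.min' hXne with hx₁def
      have hx₁ : x₁.val < (f x₁).val := (hmem x₁).mp (X.min'_mem hXne)
      have hmin : ∀ y : Fin n, y.val < (f y).val → x₁.val ≤ y.val :=
        fun y hy => X.min'_le y ((hmem y).mpr hy)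
      obtain ⟨v, hvdef⟩ : ∃ v, v = (f x₁).val := ⟨_, rfl⟩
      have hvlt : v < n := hvdef ▸ (f x₁).isLt
      have hv1 : 1 ≤ v := by omega
      have key2 : ∀ y : Fin n, (f y).val ≠ v - 1 := by
        intro y hy
        by_cases h : y.val < (f y).val
        · have h2 := hmin y h
          have := hm x₁ y h2
          omega
        · have h2 : (f y).val = y.val := by have := hlt y; omega
          have h3 : x₁.val ≤ y.val := by omega
          have := hm x₁ y h3
          omega
      set f' := fun y : Fin n =>
        if (f y).val = v ∧ y.val < v then mk n hn (v-1) else f y with hf'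
      have heq : f = fun q => bf n hn (v-1) (f' q) := by
        funext y
        by_cases hy : (f y).val = v ∧ y.val < v
        · simp only [hf', bf, if_pos hy]
          rw [if_pos (by simp only [mk_val]; omega)]
          exact (Fin.ext (by simp only [mk_val]; omega)).symm
        · simp only [hf', bf, if_neg hy]
          rw [if_neg (key2 y)]
      have hm' : ∀ i j : Fin n, i.val ≤ j.val → (f' i).val ≤ (f' j).val := by
        intro i j hij
        simp only [hf']
        have h1 := hm i j hij
        by_cases hi : (f i).val = v ∧ i.val < v <;> by_cases hj : (f j).val = v ∧ j.val < v
        · rw [if_pos hi, if_pos hj]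
        · rw [if_pos hi, if_neg hj]
          simp only [mk_val]
          omega
        · rw [if_neg hi, if_pos hj]
          simp only [mk_val]
          omega
        · rw [if_neg hi, if_neg hj]
          exact h1
      have hs' : f' (sk n hn) = sk n hn := by
        simp only [hf']
        rw [if_neg (by rw [hs]; simp only [sk_val]; omega), hs]
      have hmea : mea n f' < mea n f := by
        apply Finset.sum_lt_sum
        · intro y _
          simp only [dst, hf']
          by_cases hy : (f y).val = v ∧ y.val < v
          · rw [if_pos hy]; simp only [mk_val]; omega
          · rw [if_neg hy]
        · refine ⟨x₁, Finset.mem_univ _, ?_⟩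
          simp only [dst, hf']
          rw [if_pos ⟨hvdef.symm, by omega⟩]
          simp only [mk_val]
          omega
      exact gen_of_eq n hn
        (gen_comp n hn (ih f' (by omega) hm' hs') (gen_bf n hn (v-1) (by omega))) heq.symm

lemma mono_gen (f : Fin n → Fin n)
    (hm : ∀ i j : Fin n, i.val ≤ j.val → (f i).val ≤ (f j).val)
    (hs : f (sk n hn) = sk n hn) : Gen n hn f :=
  mono_gen_aux n hn (mea n f) f le_rfl hm hs


/-! ### Generation: all partially monotonic maps -/

def kil (f : Fin n → Fin n) : ℕ :=
  (Finset.univ.filter (fun i : Fin n => f i = sk n hn ∧ i ≠ sk n hn)).card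

lemma pm_gen_aux : ∀ N (f : Fin n → Fin n), kil n hn f ≤ N → Pm n hn f → Gen n hn f := by
  intro N
  induction N with
  | zero =>
    intro f hk hf
    -- no states are killed except possibly the sink... then f is monotone
    refine mono_gen n hn f ?_ hf.1
    intro a b hab
    by_cases hfa : f a = sk n hn
    · have ha : a ≠ sk n hn ∨ a = sk n hn := (ne_or_eq a _)
      have hcard : (Finset.univ.filter
          (fun i : Fin n => f i = sk n hn ∧ i ≠ sk n hn)).card = 0 := Nat.le_zero.mp hk
      have hempty := Finset.card_eq_zero.mp hcard
      by_cases hasn : a = sk n hn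
      · -- a = sk, so a.val = n-1 ≥ b.val, so b = sk too
        have h1 := congrArg Fin.val hasn
        simp only [sk_val] at h1
        have hb : b = sk n hn := Fin.ext (by simp only [sk_val]; have := b.isLt; omega)
        rw [hasn, hb]
      · exfalso
        have : a ∈ Finset.univ.filter (fun i : Fin n => f i = sk n hn ∧ i ≠ sk n hn) := by
          simp only [Finset.mem_filter, Finset.mem_univ, true_and]
          exact ⟨hfa, hasn⟩
        rw [hempty] at this
        exact absurd this (Finset.notMem_empty a)
    · by_cases hfb : f b = sk n hn
      · rw [hfb]
        simp only [sk_val]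
        have := (f a).isLt
        omega
      · exact hf.2 a b hab hfa hfb
  | succ N ih =>
    intro f hk hf
    obtain ⟨hs, hmono⟩ := hf
    by_cases hK : ∃ i j : Fin n, f i = sk n hn ∧ i.val < j.val ∧ f j ≠ sk n hn
    · obtain ⟨i, j, hfi, hij, hfj⟩ := hK
      have hjsk : j ≠ sk n hn := fun h => hfj (by rw [h, hs])
      have hjv : j.val ≤ n - 2 := by
        have h1 := j.isLt
        have h2 : j.val ≠ n - 1 := fun h => hjsk (Fin.ext (by simp only [sk_val]; omega))
        omega
      have hisk : i ≠ sk n hn := by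
        intro h
        have := congrArg Fin.val h
        simp only [sk_val] at this
        omega
      set J := Finset.univ.filter (fun y : Fin n => i.val < y.val ∧ f y ≠ sk n hn) with hJ
      have hmemJ : ∀ y : Fin n, y ∈ J ↔ i.val < y.val ∧ f y ≠ sk n hn := by
        intro y
        simp only [hJ, Finset.mem_filter, Finset.mem_univ, true_and]
      have hJne : J.Nonempty := ⟨j, (hmemJ j).mpr ⟨hij, hfj⟩⟩
      set j₀ := J.min' hJne with hj₀def
      have hj₀ : i.val < j₀.val ∧ f j₀ ≠ sk n hn := (hmemJ j₀).mp (J.min'_mem hJne)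
      have hminJ : ∀ y : Fin n, i.val < y.val → f y ≠ sk n hn → j₀.val ≤ y.val :=
        fun y h1 h2 => J.min'_le y ((hmemJ y).mpr ⟨h1, h2⟩)
      set f' := fun y : Fin n => if y = i then f j₀ else f y with hf'
      have hf's : f' (sk n hn) = sk n hn := by
        simp only [hf']
        rw [if_neg (show ¬ (sk n hn = i) from fun h => hisk h.symm), hs]
      have hf'pm : Pm n hn f' := by
        refine ⟨hf's, ?_⟩
        intro a b hab ha hb
        simp only [hf'] at ha hb ⊢
        by_cases hai : a = i <;> by_cases hbi : b = i
        · rw [hai, hbi]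
        · rw [if_pos hai] at ha ⊢
          rw [if_neg hbi] at hb ⊢
          have hib : i.val < b.val := by
            rcases Nat.lt_or_ge i.val b.val with h | h
            · exact h
            · exfalso
              have : a.val = i.val := by rw [hai]
              have hbeq : b = i := Fin.ext (by omega)
              exact hbi hbeq
          exact hmono j₀ b (hminJ b hib hb) ha hb
        · rw [if_neg hai] at ha ⊢
          rw [if_pos hbi] at hb ⊢
          have hab' : a.val ≤ j₀.val := by
            have : b.val = i.val := by rw [hbi]
            have := hj₀.1
            omega
          exact hmono a j₀ hab' ha hj₀.2
        · rw [if_neg hai] at ha ⊢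
          rw [if_neg hbi] at hb ⊢
          exact hmono a b hab ha hb
      have heq : f = fun q => f' (ef n hn i.val q) := by
        funext y
        simp only [hf', ef]
        by_cases hy : y = i
        · rw [hy, if_pos rfl, if_neg (show ¬ (sk n hn = i) from fun h => hisk h.symm), hs, hfi]
        · have : y.val ≠ i.val := fun h => hy (Fin.ext h)
          rw [if_neg this, if_neg hy]
      have hkil : kil n hn f' < kil n hn f := by
        apply Finset.card_lt_card
        constructor
        · intro y hy
          simp only [Finset.mem_filter, Finset.mem_univ, true_and] at hy ⊢
          obtain ⟨hy1, hy2⟩ := hy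
          simp only [hf'] at hy1
          by_cases hyi : y = i
          · rw [if_pos hyi] at hy1
            exact absurd hy1 hj₀.2
          · rw [if_neg hyi] at hy1
            exact ⟨hy1, hy2⟩
        · intro hsub
          have hi : i ∈ Finset.univ.filter (fun y : Fin n => f y = sk n hn ∧ y ≠ sk n hn) := by
            simp only [Finset.mem_filter, Finset.mem_univ, true_and]
            exact ⟨hfi, hisk⟩
          have := hsub hi
          simp only [Finset.mem_filter, Finset.mem_univ, true_and, hf'] at this
          rw [if_pos trivial] at this
          exact hj₀.2 this.1
      have hiv : i.val + 3 ≤ n := by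
        have := hj₀.1
        omega
      exact gen_of_eq n hn
        (gen_comp n hn (gen_ef n hn i.val hiv) (ih f' (by omega) hf'pm)) heq.symm
    · -- f is monotone
      push_neg at hK
      refine mono_gen n hn f ?_ hs
      intro a b hab
      by_cases hfa : f a = sk n hn
      · have hfb : f b = sk n hn := by
          by_cases haeb : a.val = b.val
          · rw [← Fin.ext haeb]
            exact hfa
          · exact hK a b hfa (by omega)
        rw [hfa, hfb]
      · by_cases hfb : f b = sk n hn
        · rw [hfb]
          simp only [sk_val]
          have := (f a).isLt
          omega
        · exact hmono a b hab hfa hfb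

lemma pm_gen (f : Fin n → Fin n) (hf : Pm n hn f) : Gen n hn f :=
  pm_gen_aux n hn (kil n hn f) f le_rfl hf

lemma sset_gen {f : Fin n → Fin n} (hf : f ∈ Sset n hn) : Gen n hn f := by
  rcases hf with hf | ⟨c, _, rfl⟩
  · exact pm_gen n hn f hf
  · exact gen_constf n hn c

lemma gen_eq_sset : {f : Fin n → Fin n |
    ∃ w : List (Fin (2*n-1)), w ≠ [] ∧ f = fun q => (M n hn).evalFrom q w} = Sset n hn := by
  ext f
  constructor
  · rintro ⟨w, hw, rfl⟩
    exact eval_mem_sset n hn w hw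
  · exact fun hf => sset_gen n hn hf


/-! ### Counting monotone maps -/

lemma sort_ofFn_get {m k : ℕ} (g : Fin k → Fin m) (hg : Monotone g) (j : Fin k)
    (hc : k = (Multiset.sort ((List.ofFn g : List (Fin m)) : Multiset (Fin m)) (· ≤ ·)).length) :
    (Multiset.sort ((List.ofFn g : List (Fin m)) : Multiset (Fin m)) (· ≤ ·)).get
      (Fin.cast hc j) = g j := by
  have hsorted : (List.ofFn g).Pairwise (· ≤ ·) := hg.sortedLE_ofFn.pairwise
  have heq : Multiset.sort ((List.ofFn g : List (Fin m)) : Multiset (Fin m)) (· ≤ ·)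
      = List.ofFn g :=
    List.Perm.eq_of_pairwise'
      (Multiset.pairwise_sort _ _) hsorted (Multiset.coe_eq_coe.mp (Multiset.sort_eq _ _))
  rw [List.get_of_eq heq, List.get_ofFn]
  first
  | rfl
  | (congr 1; exact Fin.ext rfl)


open Finset in
lemma card_mono_filter (m k : ℕ) :
    ((Finset.univ : Finset (Fin k → Fin m)).filter (fun g => Monotone g)).card
      = (m + k - 1).choose k := by
  classical
  rw [← Fintype.card_subtype]
  have e : {g : Fin k → Fin m // Monotone g} ≃ Sym (Fin m) k := by
    refine
      { toFun := fun g => ⟨(List.ofFn g.1 : Multiset (Fin m)), by simp⟩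
        invFun := fun s => ⟨fun j => (Multiset.sort s.1 (· ≤ ·)).get
            (Fin.cast (by rw [Multiset.length_sort, s.2]) j), ?_⟩
        left_inv := ?_
        right_inv := ?_ }
    · intro a b hab
      exact (Multiset.pairwise_sort _ _).rel_get_of_le (by exact hab)
    · rintro ⟨g, hg⟩
      apply Subtype.ext
      funext j
      exact sort_ofFn_get g hg j (by rw [Multiset.length_sort]; simp)
    · rintro ⟨s, hs⟩
      apply Subtype.ext
      simp only
      have hl : (Multiset.sort s (· ≤ ·)).length = k := by rw [Multiset.length_sort, hs]
      have hofn : List.ofFn (fun j : Fin k => (Multiset.sort s (· ≤ ·)).get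
          (Fin.cast (by rw [Multiset.length_sort, hs]) j)) = Multiset.sort s (· ≤ ·) := by
        apply List.ext_get
        · simp [hl]
        · intro i h1 h2
          simp [List.get_ofFn]
      rw [hofn, Multiset.sort_eq]
  rw [Fintype.card_congr e, Sym.card_sym_eq_choose, Fintype.card_fin]


/-! ### Counting the semigroup -/

def emb (i : Fin (n-1)) : Fin n := ⟨i.val, lt_of_lt_of_le i.isLt (Nat.sub_le n 1)⟩

@[simp] lemma emb_val (i : Fin (n-1)) : (emb n i).val = i.val := rfl

open Classical in
def Dmap (f : Fin n → Fin n) : Finset (Fin (n-1)) :=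
  Finset.univ.filter (fun i => f (emb n i) ≠ sk n hn)

open Classical in
lemma mem_Dmap {f : Fin n → Fin n} {i : Fin (n-1)} :
    i ∈ Dmap n hn f ↔ f (emb n i) ≠ sk n hn := by
  simp [Dmap]

def lowv (q : Fin n) : Fin (n-1) := ⟨min q.val (n-2), by omega⟩

@[simp] lemma lowv_val (q : Fin n) : (lowv n hn q).val = min q.val (n-2) := rfl

def toPair (D : Finset (Fin (n-1))) (f : Fin n → Fin n) : Fin D.card → Fin (n-1) :=
  fun j => lowv n hn (f (emb n ((D.orderIsoOfFin rfl j : ↥D) : Fin (n-1))))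

open Classical in
def fromPair (D : Finset (Fin (n-1))) (g : Fin D.card → Fin (n-1)) : Fin n → Fin n :=
  fun q => if h : q.val < n-1 then
      (if hm : (⟨q.val, h⟩ : Fin (n-1)) ∈ D then
        emb n (g ((D.orderIsoOfFin rfl).symm ⟨⟨q.val, h⟩, hm⟩)) else sk n hn)
    else sk n hn

lemma emb_ne_sk (i : Fin (n-1)) : emb n i ≠ sk n hn := by
  intro h
  have := congrArg Fin.val h
  have h2 := i.isLt
  simp only [emb_val, sk_val] at this
  omega

lemma ne_sk_val {q : Fin n} (h : q ≠ sk n hn) : q.val ≤ n - 2 := by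
  have h1 := q.isLt
  have h2 : q.val ≠ n - 1 := fun hc => h (Fin.ext (by simp only [sk_val]; omega))
  omega

open Classical in
lemma fiber_card (D : Finset (Fin (n-1))) :
    (Finset.univ.filter (fun f : Fin n → Fin n => Pm n hn f ∧ Dmap n hn f = D)).card
      = ((Finset.univ : Finset (Fin D.card → Fin (n-1))).filter (fun g => Monotone g)).card := by
  classical
  refine Finset.card_bij' (fun f _ => toPair n hn D f) (fun g _ => fromPair n hn D g)
    ?_ ?_ ?_ ?_
  · -- toPair lands in monotone maps
    intro f hf
    simp only [Finset.mem_filter, Finset.mem_univ, true_and] at hf ⊢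
    obtain ⟨⟨hs, hmono⟩, hD⟩ := hf
    intro j j' hjj'
    have hle : ((D.orderIsoOfFin rfl j : ↥D) : Fin (n-1)).val
        ≤ ((D.orderIsoOfFin rfl j' : ↥D) : Fin (n-1)).val :=
      (D.orderIsoOfFin rfl).le_iff_le.mpr hjj'
    have hm1 : f (emb n ((D.orderIsoOfFin rfl j : ↥D) : Fin (n-1))) ≠ sk n hn := by
      rw [← mem_Dmap n hn, hD]
      exact (D.orderIsoOfFin rfl j).2
    have hm2 : f (emb n ((D.orderIsoOfFin rfl j' : ↥D) : Fin (n-1))) ≠ sk n hn := by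
      rw [← mem_Dmap n hn, hD]
      exact (D.orderIsoOfFin rfl j').2
    have := hmono _ _ hle hm1 hm2
    have hv1 := ne_sk_val n hn hm1
    have hv2 := ne_sk_val n hn hm2
    show (lowv n hn _) ≤ (lowv n hn _)
    rw [Fin.le_def]
    simp only [lowv_val]
    omega
  · -- fromPair lands in the fiber
    intro g hg
    simp only [Finset.mem_filter, Finset.mem_univ, true_and] at hg ⊢
    constructor
    · constructor
      · -- sink is fixed
        simp only [fromPair]
        rw [dif_neg (by simp only [sk_val]; omega)]
      · intro a b hab ha hb
        simp only [fromPair] at ha hb ⊢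
        by_cases h1 : a.val < n-1
        · by_cases hm1 : (⟨a.val, h1⟩ : Fin (n-1)) ∈ D
          · by_cases h2 : b.val < n-1
            · by_cases hm2 : (⟨b.val, h2⟩ : Fin (n-1)) ∈ D
              · rw [dif_pos h1, dif_pos hm1, dif_pos h2, dif_pos hm2]
                rw [dif_pos h1, dif_pos hm1] at ha
                rw [dif_pos h2, dif_pos hm2] at hb
                have hidx : (D.orderIsoOfFin rfl).symm ⟨⟨a.val, h1⟩, hm1⟩
                    ≤ (D.orderIsoOfFin rfl).symm ⟨⟨b.val, h2⟩, hm2⟩ := by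
                  rw [OrderIso.le_iff_le]
                  exact hab
                have := hg hidx
                rw [Fin.le_def] at this
                simp only [emb_val]
                exact this
              · exfalso
                rw [dif_pos h2, dif_neg hm2] at hb
                exact hb rfl
            · exfalso
              rw [dif_neg h2] at hb
              exact hb rfl
          · exfalso
            rw [dif_pos h1, dif_neg hm1] at ha
            exact ha rfl
        · exfalso
          rw [dif_neg h1] at ha
          exact ha rfl
    · -- Dmap of fromPair is D
      ext i
      rw [mem_Dmap n hn]
      show (if h : i.val < n-1 then (if hm : (⟨i.val, h⟩ : Fin (n-1)) ∈ D then
          emb n (g ((D.orderIsoOfFin rfl).symm ⟨⟨i.val, h⟩, hm⟩)) else sk n hn)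
        else sk n hn) ≠ sk n hn ↔ i ∈ D
      rw [dif_pos (i.isLt)]
      by_cases hm : (⟨i.val, i.isLt⟩ : Fin (n-1)) ∈ D
      · rw [dif_pos hm]
        have h1 : (⟨i.val, i.isLt⟩ : Fin (n-1)) = i := Fin.ext rfl
        simp only [h1] at hm ⊢
        exact iff_of_true (emb_ne_sk n hn _) hm
      · rw [dif_neg hm]
        have h1 : (⟨i.val, i.isLt⟩ : Fin (n-1)) = i := Fin.ext rfl
        simp only [h1] at hm
        exact iff_of_false (fun hc => hc rfl) hm
  · -- left inverse
    intro f hf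
    simp only [Finset.mem_filter, Finset.mem_univ, true_and] at hf
    obtain ⟨⟨hs, hmono⟩, hD⟩ := hf
    funext q
    simp only [fromPair]
    by_cases h1 : q.val < n-1
    · by_cases hm : (⟨q.val, h1⟩ : Fin (n-1)) ∈ D
      · rw [dif_pos h1, dif_pos hm]
        simp only [toPair, OrderIso.apply_symm_apply]
        have hq : emb n (⟨q.val, h1⟩ : Fin (n-1)) = q := Fin.ext rfl
        rw [hq]
        have hne : f q ≠ sk n hn := by
          have := hm
          rw [hD.symm, mem_Dmap n hn, hq] at this
          exact this
        have hval := ne_sk_val n hn hne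
        apply Fin.ext
        simp only [emb_val, lowv_val]
        omega
      · rw [dif_pos h1, dif_neg hm]
        have hq : emb n (⟨q.val, h1⟩ : Fin (n-1)) = q := Fin.ext rfl
        have := hm
        rw [hD.symm, mem_Dmap n hn, hq] at this
        push_neg at this
        exact this.symm
    · rw [dif_neg h1]
      have hq : q = sk n hn := Fin.ext (by simp only [sk_val]; have := q.isLt; omega)
      rw [hq, hs]
  · -- right inverse
    intro g hg
    funext j
    simp only [toPair, fromPair]
    have hlt : ((D.orderIsoOfFin rfl j : ↥D) : Fin (n-1)).val < n - 1 :=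
      ((D.orderIsoOfFin rfl j : ↥D) : Fin (n-1)).isLt
    rw [dif_pos (show (emb n ((D.orderIsoOfFin rfl j : ↥D) : Fin (n-1))).val < n-1 from hlt)]
    have hmem : (⟨(emb n ((D.orderIsoOfFin rfl j : ↥D) : Fin (n-1))).val, hlt⟩ : Fin (n-1)) ∈ D := by
      have : (⟨(emb n ((D.orderIsoOfFin rfl j : ↥D) : Fin (n-1))).val, hlt⟩ : Fin (n-1))
          = ((D.orderIsoOfFin rfl j : ↥D) : Fin (n-1)) := Fin.ext rfl
      rw [this]
      exact (D.orderIsoOfFin rfl j).2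
    rw [dif_pos hmem]
    have hsub : (⟨(⟨(emb n ((D.orderIsoOfFin rfl j : ↥D) : Fin (n-1))).val, hlt⟩ : Fin (n-1)), hmem⟩ : ↥D)
        = D.orderIsoOfFin rfl j := Subtype.ext (Fin.ext rfl)
    rw [hsub, OrderIso.symm_apply_apply]
    apply Fin.ext
    simp only [lowv_val, emb_val]
    have := (g j).isLt
    omega


open Classical in
lemma sp_card : (Finset.univ.filter (fun f : Fin n → Fin n => Pm n hn f)).card
    = ∑ k ∈ Finset.range n, (n-1).choose k * (n+k-2).choose k := by
  classical
  rw [Finset.card_eq_sum_card_fiberwise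
    (f := fun f => Dmap n hn f) (t := (Finset.univ : Finset (Finset (Fin (n-1)))))
    (fun f _ => Finset.mem_univ _)]
  have h2 : ∀ D : Finset (Fin (n-1)),
      ((Finset.univ.filter (fun f : Fin n → Fin n => Pm n hn f)).filter
        (fun f => Dmap n hn f = D)).card = ((n-1) + D.card - 1).choose D.card := by
    intro D
    rw [Finset.filter_filter, fiber_card n hn D, card_mono_filter]
  rw [Finset.sum_congr rfl (fun D _ => h2 D)]
  rw [← Finset.powerset_univ,
    Finset.sum_powerset_apply_card (fun k => ((n-1) + k - 1).choose k)]
  have hcard : (Finset.univ : Finset (Fin (n-1))).card = n - 1 := by simp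
  rw [hcard]
  have hr : n - 1 + 1 = n := by omega
  rw [hr]
  refine Finset.sum_congr rfl (fun k _ => ?_)
  rw [smul_eq_mul]
  congr 2
  omega

open Classical in
lemma c_card : (Finset.univ.filter
    (fun f : Fin n → Fin n => ∃ c : Fin n, c ≠ sk n hn ∧ f = fun _ => c)).card = n - 1 := by
  classical
  have himg : Finset.univ.filter
      (fun f : Fin n → Fin n => ∃ c : Fin n, c ≠ sk n hn ∧ f = fun _ => c)
      = (Finset.univ.erase (sk n hn)).image (fun c : Fin n => (fun _ : Fin n => c)) := by
    ext f
    simp only [Finset.mem_filter, Finset.mem_univ, true_and, Finset.mem_image,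
      Finset.mem_erase]
    constructor
    · rintro ⟨c, hc, rfl⟩
      exact ⟨c, ⟨hc, trivial⟩, rfl⟩
    · rintro ⟨c, ⟨hc, _⟩, rfl⟩
      exact ⟨c, hc, rfl⟩
  have hinj : Function.Injective (fun c : Fin n => (fun _ : Fin n => c)) := by
    intro c c' h
    exact congrFun h ⟨0, by omega⟩
  rw [himg, Finset.card_image_of_injective _ hinj,
    Finset.card_erase_of_mem (Finset.mem_univ _), Finset.card_univ, Fintype.card_fin]

open Classical in
lemma sset_card : Nat.card ↥(Sset n hn)
    = (∑ k ∈ Finset.range n, (n-1).choose k * (n+k-2).choose k) + n - 1 := by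
  classical
  rw [Nat.card_eq_fintype_card, ← Set.toFinset_card]
  have hsplit : (Sset n hn).toFinset
      = Finset.univ.filter (fun f : Fin n → Fin n => Pm n hn f)
        ∪ Finset.univ.filter
          (fun f : Fin n → Fin n => ∃ c : Fin n, c ≠ sk n hn ∧ f = fun _ => c) := by
    ext f
    simp only [Set.mem_toFinset, Finset.mem_union, Finset.mem_filter, Finset.mem_univ,
      true_and]
    rfl
  have hdisj : Disjoint
      (Finset.univ.filter (fun f : Fin n → Fin n => Pm n hn f))
      (Finset.univ.filter
        (fun f : Fin n → Fin n => ∃ c : Fin n, c ≠ sk n hn ∧ f = fun _ => c)) := by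
    rw [Finset.disjoint_left]
    intro f hf hc
    simp only [Finset.mem_filter, Finset.mem_univ, true_and] at hf hc
    obtain ⟨c, hcne, rfl⟩ := hc
    exact hcne hf.1
  rw [hsplit, Finset.card_union_of_disjoint hdisj, sp_card n hn, c_card n hn]
  have hsum : (1:ℕ) ≤ n := by omega
  omega

/-! ### Accessibility and distinguishability -/

lemma eval_rep (k : ℕ) (q : Fin n) :
    (M n hn).evalFrom q (List.replicate k ⟨2, by omega⟩) = mk n hn (q.val + k) := by
  induction k generalizing q with
  | zero =>
    apply Fin.ext
    have := q.isLt
    simp [DFA.evalFrom]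
    omega
  | succ k ih =>
    rw [List.replicate_succ, eval_cons]
    have hstep : stepf n hn q ⟨2, by omega⟩ = mk n hn (q.val + 1) := by
      simp [stepf]
    rw [hstep, ih]
    apply Fin.ext
    have := q.isLt
    simp
    omega

lemma accessible (q : Fin n) :
    ∃ w : List (Fin (2*n-1)), (M n hn).evalFrom (M n hn).start w = q := by
  refine ⟨List.replicate q.val ⟨2, by omega⟩, ?_⟩
  have : (M n hn).start = mk n hn 0 := rfl
  rw [this, eval_rep]
  apply Fin.ext
  have := q.isLt
  simp
  omega

lemma distinguish_lt {p q : Fin n} (h : p.val < q.val) :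
    ∃ w : List (Fin (2*n-1)),
      Xor' ((M n hn).evalFrom p w ∈ (M n hn).accept) ((M n hn).evalFrom q w ∈ (M n hn).accept) := by
  refine ⟨List.replicate (n-1-q.val) ⟨2, by omega⟩, ?_⟩
  have hq := q.isLt
  have hp := p.isLt
  rw [eval_rep, eval_rep]
  have hacc : (M n hn).accept = {sk n hn} := rfl
  refine Or.inr ⟨?_, ?_⟩
  · rw [hacc, Set.mem_singleton_iff]
    apply Fin.ext
    simp
    omega
  · rw [hacc, Set.mem_singleton_iff]
    intro hc
    have := congrArg Fin.val hc
    simp at this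
    omega

lemma distinguish {p q : Fin n} (h : p ≠ q) :
    ∃ w : List (Fin (2*n-1)),
      Xor' ((M n hn).evalFrom p w ∈ (M n hn).accept) ((M n hn).evalFrom q w ∈ (M n hn).accept) := by
  have hval : p.val ≠ q.val := fun hc => h (Fin.ext hc)
  rcases Nat.lt_or_ge p.val q.val with hlt | hge
  · exact distinguish_lt n hn hlt
  · have hlt : q.val < p.val := by omega
    obtain ⟨w, hw⟩ := distinguish_lt n hn hlt
    exact ⟨w, Or.symm hw⟩

end NMD

/-- A transformation of `Fin n` is aperiodic if it contains no cycles of length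
greater than 1: for every `x` and every `k ≥ 1`, `t^[k] x = x` implies `t x = x`. -/
def Aperiodic' {n : ℕ} (t : Fin n → Fin n) : Prop :=
  ∀ (x : Fin n) (k : ℕ), 1 ≤ k → t^[k] x = x → t x = x

/-- For every `n ≥ 2` there is a DFA over an alphabet of `2n-1` letters with
state set `Fin n` that is accessible, reduced, all of whose word transformations
are aperiodic, and whose transition semigroup (transformations induced by
non-empty words) has exactly `(∑_{k=0}^{n-1} C(n-1,k)·C(n+k-2,k)) + n - 1`
elements. -/
theorem exists_nearly_monotonic_dfa (n : ℕ) (hn : 2 ≤ n) :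
    ∃ M : DFA (Fin (2 * n - 1)) (Fin n),
      (∀ q : Fin n, ∃ w : List (Fin (2 * n - 1)), M.evalFrom M.start w = q) ∧
      (∀ p q : Fin n, p ≠ q → ∃ w : List (Fin (2 * n - 1)),
        Xor' (M.evalFrom p w ∈ M.accept) (M.evalFrom q w ∈ M.accept)) ∧
      (∀ w : List (Fin (2 * n - 1)), Aperiodic' (fun q => M.evalFrom q w)) ∧
      Nat.card {f : Fin n → Fin n |
          ∃ w : List (Fin (2 * n - 1)), w ≠ [] ∧ f = fun q => M.evalFrom q w} =
        (∑ k ∈ Finset.range n, Nat.choose (n - 1) k * Nat.choose (n + k - 2) k)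
          + n - 1 := by
  classical
  refine ⟨NMD.M n hn, NMD.accessible n hn, fun p q h => NMD.distinguish n hn h, ?_, ?_⟩
  · intro w
    by_cases hw : w = []
    · subst hw
      intro x k _ _
      rfl
    · intro x k hk hit
      exact NMD.sset_aperiodic n hn (NMD.eval_mem_sset n hn w hw) x k hk hit
  · rw [show {f : Fin n → Fin n |
        ∃ w : List (Fin (2 * n - 1)), w ≠ [] ∧ f = fun q => (NMD.M n hn).evalFrom q w}
        = NMD.Sset n hn from NMD.gen_eq_sset n hn]
    exact NMD.sset_card n hn
end

section
/- For every n ≥ 2 there exists a DFA M over an alphabet with 2n−2 letters, with state type Fin n, such that: every state is reachable from the start state by some word; any two distinct states are distinguishable (for distinct states p, q there is a word w such that exactly one of M.evalFrom p w and M.evalFrom q w is accepting); for every word w the transformation q ↦ M.evalFrom q w lies in the set CM of monotonic completed transformations of Fin n; and the set { f : Fin n → Fin n | ∃ w ≠ [], f = fun q => M.evalFrom q w } has cardinality exactly ∑_{k=0}^{n−1} C(n−1,k)·C(n+k−2,k). -/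
namespace PMDfa

/-- the letter function `c i`: kills `i`, shifts `(i, n-1)` down by one, fixes the rest. -/
def cf (n i : ℕ) (v : Fin n) : Fin n :=
  if v.val = i then ⟨n - 1, by have := v.isLt; omega⟩
  else if i < v.val ∧ v.val < n - 1 then ⟨v.val - 1, by have := v.isLt; omega⟩ else v

/-- the letter function `u i`: moves `i` up to `i+1` (if `i+1 < n-1`), fixes the rest. -/
def uf (n i : ℕ) (v : Fin n) : Fin n :=
  if h : v.val = i ∧ i + 1 < n - 1 then ⟨i + 1, by have := v.isLt; omega⟩ else v

lemma val_cf (n i : ℕ) (v : Fin n) :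
    (cf n i v).val = if v.val = i then n - 1
      else if i < v.val ∧ v.val < n - 1 then v.val - 1 else v.val := by
  unfold cf; split_ifs <;> rfl

lemma val_uf (n i : ℕ) (v : Fin n) :
    (uf n i v).val = if v.val = i ∧ i + 1 < n - 1 then i + 1 else v.val := by
  unfold uf; split_ifs <;> rfl

/-- The DFA. -/
def M (n : ℕ) (hn : 2 ≤ n) : DFA (Fin (2 * n - 2)) (Fin n) where
  step := fun q a => if a.val < n - 1 then cf n a.val q else uf n (a.val - (n - 1)) q
  start := ⟨0, by omega⟩
  accept := {⟨0, by omega⟩}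

variable {n : ℕ}

/-- transformation of a word -/
def tfw (hn : 2 ≤ n) (w : List (Fin (2 * n - 2))) : Fin n → Fin n :=
  fun q => (M n hn).evalFrom q w

lemma tfw_nil (hn : 2 ≤ n) : tfw hn [] = id := rfl

lemma tfw_append (hn : 2 ≤ n) (w₁ w₂ : List (Fin (2 * n - 2))) :
    tfw hn (w₁ ++ w₂) = tfw hn w₂ ∘ tfw hn w₁ := by
  funext q; exact (M n hn).evalFrom_of_append q w₁ w₂

def cL (hn : 2 ≤ n) (i : ℕ) : Fin (2 * n - 2) :=
  if h : i < n - 1 then ⟨i, by omega⟩ else ⟨2 * n - 3, by omega⟩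

def uL (hn : 2 ≤ n) (i : ℕ) : Fin (2 * n - 2) :=
  if h : i < n - 1 then ⟨n - 1 + i, by omega⟩ else ⟨2 * n - 3, by omega⟩

lemma uf_id (hn : 2 ≤ n) (i : ℕ) (hi : ¬ i + 1 < n - 1) : uf n i = id := by
  funext v; unfold uf; rw [dif_neg]; · rfl
  · rintro ⟨h1, h2⟩; omega

lemma tfw_cL (hn : 2 ≤ n) (i : ℕ) (hi : i < n - 1) : tfw hn [cL hn i] = cf n i := by
  funext q
  show (M n hn).step q (cL hn i) = _
  unfold M cL
  rw [dif_pos hi]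
  simp only [if_pos hi]

lemma tfw_uL (hn : 2 ≤ n) (i : ℕ) : tfw hn [uL hn i] = uf n i := by
  funext q
  show (M n hn).step q (uL hn i) = _
  unfold M uL
  by_cases hi : i < n - 1
  · rw [dif_pos hi]
    simp only
    rw [if_neg (by omega)]
    congr 2
    omega
  · rw [dif_neg hi]
    simp only
    rw [if_neg (by omega)]
    rw [uf_id hn _ (by omega), uf_id hn i (by omega)]



/-- block shift-up word with fuel `k` starting at `i`: letters `u_{i+k-1}, ..., u_{i+1}, u_i`
applied in that order. -/
def wB (hn : 2 ≤ n) : ℕ → ℕ → List (Fin (2 * n - 2))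
  | 0, _ => []
  | (k+1), i => wB hn k (i+1) ++ [uL hn i]

/-- block shift function: `v ↦ v+1` on `[i, i+k)` (when in range), else fixed. -/
def bf (n k i : ℕ) (v : Fin n) : Fin n :=
  if h : i ≤ v.val ∧ v.val < i + k ∧ v.val + 1 < n then ⟨v.val + 1, by omega⟩ else v

lemma val_bf (n k i : ℕ) (v : Fin n) :
    (bf n k i v).val = if i ≤ v.val ∧ v.val < i + k ∧ v.val + 1 < n then v.val + 1 else v.val := by
  unfold bf; split_ifs <;> rfl

lemma tfw_wB (hn : 2 ≤ n) (k i : ℕ) (hik : i + k ≤ n - 2) :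
    tfw hn (wB hn k i) = bf n k i := by
  induction k generalizing i with
  | zero =>
    rw [wB, tfw_nil]
    funext v; apply Fin.ext
    rw [val_bf]
    simp only [id_eq]
    rw [if_neg (by omega)]
  | succ k ih =>
    rw [wB, tfw_append, ih (i+1) (by omega), tfw_uL]
    funext v; apply Fin.ext
    simp only [Function.comp_apply]
    rw [val_uf, val_bf, val_bf]
    have := v.isLt
    split_ifs <;> omega

/-- the "erase i" function: `i ↦ n-1`, all else fixed. -/
def ef (n i : ℕ) (v : Fin n) : Fin n :=
  if v.val = i ∧ i < n - 1 then ⟨n - 1, by have := v.isLt; omega⟩ else v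

lemma val_ef (n i : ℕ) (v : Fin n) :
    (ef n i v).val = if v.val = i ∧ i < n - 1 then n - 1 else v.val := by
  unfold ef; split_ifs <;> rfl

/-- word for `ef i` (for `i < n-1`): `c i` then shift `[i, n-2)` back up. -/
def wE (hn : 2 ≤ n) (i : ℕ) : List (Fin (2 * n - 2)) :=
  cL hn i :: wB hn (n - 2 - i) i

lemma tfw_wE (hn : 2 ≤ n) (i : ℕ) (hi : i < n - 1) : tfw hn (wE hn i) = ef n i := by
  have : wE hn i = [cL hn i] ++ wB hn (n - 2 - i) i := rfl
  rw [wE]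
  show tfw hn ([cL hn i] ++ wB hn (n - 2 - i) i) = _
  rw [tfw_append, tfw_cL hn i hi, tfw_wB hn _ i (by omega)]
  funext v; apply Fin.ext
  simp only [Function.comp_apply]
  rw [val_bf, val_cf, val_ef]
  have := v.isLt
  split_ifs <;> omega

/-- kill every value in the list `L`. -/
def kf (n : ℕ) (L : List ℕ) (v : Fin n) : Fin n :=
  if v.val ∈ L ∧ v.val < n - 1 then ⟨n - 1, by have := v.isLt; omega⟩ else v

lemma val_kf (n : ℕ) (L : List ℕ) (v : Fin n) :
    (kf n L v).val = if v.val ∈ L ∧ v.val < n - 1 then n - 1 else v.val := by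
  unfold kf; split_ifs <;> rfl

def wKill (hn : 2 ≤ n) (L : List ℕ) : List (Fin (2 * n - 2)) :=
  (L.map (wE hn)).flatten

lemma tfw_wKill (hn : 2 ≤ n) (L : List ℕ) (hL : ∀ x ∈ L, x < n - 1) :
    tfw hn (wKill hn L) = kf n L := by
  induction L with
  | nil =>
    rw [wKill]
    simp only [List.map_nil, List.flatten_nil, tfw_nil]
    funext v; apply Fin.ext
    rw [val_kf]
    simp only [List.not_mem_nil, false_and, if_false, id_eq]
  | cons a L ih =>
    have ha : a < n - 1 := hL a List.mem_cons_self
    have step : wKill hn (a :: L) = wE hn a ++ wKill hn L := by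
      unfold wKill; simp
    rw [step, tfw_append, ih (fun x hx => hL x (List.mem_cons_of_mem a hx)), tfw_wE hn a ha]
    funext v; apply Fin.ext
    simp only [Function.comp_apply]
    rw [val_kf, val_ef, val_kf]
    have hv := v.isLt
    have hnL : ¬ (n - 1 ∈ L) := fun h => by have := hL _ (List.mem_cons_of_mem a h); omega
    by_cases h1 : v.val = a ∧ a < n - 1
    · simp only [if_pos h1]
      rw [if_neg (by rintro ⟨-, hc⟩; omega),
        if_pos ⟨List.mem_cons.mpr (Or.inl h1.1), by omega⟩]
    · simp only [if_neg h1]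
      by_cases h2 : v.val ∈ L ∧ v.val < n - 1
      · rw [if_pos h2, if_pos ⟨List.mem_cons_of_mem a h2.1, h2.2⟩]
      · rw [if_neg h2, if_neg (by
          rintro ⟨h3, h4⟩
          rcases List.mem_cons.mp h3 with h | h
          · exact h1 ⟨h, by omega⟩
          · exact h2 ⟨h, h4⟩)]


/-- the "down" function: `i+1 ↦ i` (when `i+1 < n-1`), all else fixed. -/
def df (n i : ℕ) (v : Fin n) : Fin n :=
  if h : v.val = i + 1 ∧ i + 1 < n - 1 then ⟨i, by omega⟩ else v

lemma val_df (n i : ℕ) (v : Fin n) :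
    (df n i v).val = if v.val = i + 1 ∧ i + 1 < n - 1 then i else v.val := by
  unfold df; split_ifs <;> rfl

def wD (hn : 2 ≤ n) (i : ℕ) : List (Fin (2 * n - 2)) :=
  uL hn i :: cL hn i :: wB hn (n - 2 - (i + 1)) (i + 1)

lemma tfw_wD (hn : 2 ≤ n) (i : ℕ) (hi : i + 1 < n - 1) : tfw hn (wD hn i) = df n i := by
  show tfw hn ([uL hn i] ++ ([cL hn i] ++ wB hn (n - 2 - (i + 1)) (i + 1))) = _
  rw [tfw_append, tfw_append, tfw_uL, tfw_cL hn i (by omega),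
    tfw_wB hn _ (i + 1) (by omega)]
  funext v; apply Fin.ext
  simp only [Function.comp_apply]
  rw [val_bf, val_cf, val_uf, val_df]
  have := v.isLt
  split_ifs <;> omega

lemma step_uL (hn : 2 ≤ n) (i : ℕ) (v : Fin n) :
    (M n hn).step v (uL hn i) = uf n i v := congrFun (tfw_uL hn i) v

lemma step_cL (hn : 2 ≤ n) (i : ℕ) (hi : i < n - 1) (v : Fin n) :
    (M n hn).step v (cL hn i) = cf n i v := congrFun (tfw_cL hn i hi) v

lemma tfw_cons (hn : 2 ≤ n) (a : Fin (2 * n - 2)) (w : List (Fin (2 * n - 2))) (v : Fin n) :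
    tfw hn (a :: w) v = tfw hn w ((M n hn).step v a) := rfl

/-- Generation of completed monotone maps lying (weakly) above the identity. -/
lemma up_gen (hn : 2 ≤ n) (k : ℕ) :
    ∀ g : ℕ → ℕ,
    (∑ v ∈ Finset.range (n - 1), (g v - v)) ≤ k →
    (∀ v, v < n - 1 → v ≤ g v ∧ g v < n - 1) →
    (∀ v w, v ≤ w → w < n - 1 → g v ≤ g w) →
    ∃ wd : List (Fin (2 * n - 2)),
      ∀ v : Fin n, (tfw hn wd v).val = (if v.val < n - 1 then g v.val else v.val) := by
  induction k with
  | zero =>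
    intro g hμ h1 h3
    refine ⟨[], fun v => ?_⟩
    rw [tfw_nil]
    have hz := Finset.sum_eq_zero_iff.mp (Nat.le_zero.mp hμ)
    simp only [id_eq]
    split_ifs with hv
    · have := hz v.val (Finset.mem_range.mpr hv)
      have := (h1 v.val hv).1
      omega
    · rfl
  | succ k ih =>
    intro g hμ h1 h3
    by_cases hid : ∀ v < n - 1, g v = v
    · refine ⟨[], fun v => ?_⟩
      rw [tfw_nil]
      simp only [id_eq]
      split_ifs with hv
      · exact (hid _ hv).symm
      · rfl
    · push_neg at hid
      obtain ⟨v₀, hv₀, hgv₀⟩ := hid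
      have hP : ∃ j, j + 1 < n - 1 ∧ g j = g (j + 1) := by
        by_contra hnm
        push_neg at hnm
        have key : ∀ d v, v < n - 1 → n - 2 - v ≤ d → g v ≤ v := by
          intro d
          induction d with
          | zero => intro v hv hd; have := (h1 v hv).2; omega
          | succ d ihd =>
            intro v hv hd
            by_cases hv2 : n - 2 ≤ v
            · have := (h1 v hv).2; omega
            · have h5 := ihd (v + 1) (by omega) (by omega)
              have h6 := hnm v (by omega)
              have h7 := h3 v (v + 1) (by omega) (by omega)
              omega
        have := key (n - 2 - v₀) v₀ hv₀ le_rfl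
        have := (h1 v₀ hv₀).1
        omega
      classical
      set j := Nat.find hP with hjdef
      obtain ⟨hj1, hj2⟩ : j + 1 < n - 1 ∧ g j = g (j + 1) := Nat.find_spec hP
      set p : ℕ := if 0 < j then g (j - 1) else 0 with hp
      set g' : ℕ → ℕ := fun v => if v = j then max j p else g v with hg'
      have hgj : g j < n - 1 := (h1 j (by omega)).2
      have hjlt : j < g j := by have := (h1 (j + 1) hj1).1; omega
      have hplt : p < g j := by
        rw [hp]; split_ifs with h0
        · have hle := h3 (j - 1) j (by omega) (by omega)
          rcases lt_or_eq_of_le hle with h | h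
          · exact h
          · exact absurd ⟨by omega, by rw [show j - 1 + 1 = j by omega]; exact h⟩
              (Nat.find_min hP (show j - 1 < j by omega))
        · omega
      have h1' : ∀ v, v < n - 1 → v ≤ g' v ∧ g' v < n - 1 := by
        intro v hv; rw [hg']; simp only
        split_ifs with he
        · subst he; omega
        · exact h1 v hv
      have h3' : ∀ v w, v ≤ w → w < n - 1 → g' v ≤ g' w := by
        intro v w hvw hw; rw [hg']; simp only
        split_ifs with he hf hf
        · exact le_rfl
        · -- v = j < w
          subst he
          have hw1 : j + 1 ≤ w := by omega
          have hg1 : g (j + 1) ≤ g w := h3 (j + 1) w hw1 hw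
          have hg2 : p ≤ g j := le_of_lt hplt
          omega
        · -- v < w = j
          subst hf
          have h0 : 0 < j := by omega
          have : g v ≤ g (j - 1) := h3 v (j - 1) (by omega) (by omega)
          rw [hp]; rw [if_pos h0]
          omega
        · exact h3 v w hvw hw
      have hlt : (∑ v ∈ Finset.range (n - 1), (g' v - v)) < ∑ v ∈ Finset.range (n - 1), (g v - v) := by
        apply Finset.sum_lt_sum
        · intro i _
          rw [hg']; simp only
          split_ifs with he
          · subst he; omega
          · exact le_rfl
        · refine ⟨j, Finset.mem_range.mpr (by omega), ?_⟩
          simp only [hg', if_true]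
          omega
      obtain ⟨wd', hwd'⟩ := ih g' (by omega) h1' h3'
      refine ⟨uL hn j :: wd', fun v => ?_⟩
      rw [tfw_cons, step_uL, hwd' (uf n j v)]
      have hvlt := v.isLt
      by_cases hc : v.val = j
      · have huv : (uf n j v).val = j + 1 := by rw [val_uf, if_pos ⟨hc, hj1⟩]
        rw [huv, if_pos hj1]
        simp only [hg']
        rw [if_neg (by omega), if_pos (by omega), hc]
        exact hj2.symm
      · have huv : (uf n j v).val = v.val := by
          rw [val_uf, if_neg (by intro hx; exact hc hx.1)]
        rw [huv]
        simp only [hg']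
        split_ifs <;> omega

/-- Generation of completed monotone maps lying (weakly) below the identity. -/
lemma down_gen (hn : 2 ≤ n) (k : ℕ) :
    ∀ g : ℕ → ℕ,
    (∑ v ∈ Finset.range (n - 1), (v - g v)) ≤ k →
    (∀ v, v < n - 1 → g v ≤ v) →
    (∀ v w, v ≤ w → w < n - 1 → g v ≤ g w) →
    ∃ wd : List (Fin (2 * n - 2)),
      ∀ v : Fin n, (tfw hn wd v).val = (if v.val < n - 1 then g v.val else v.val) := by
  induction k with
  | zero =>
    intro g hμ h1 h3
    refine ⟨[], fun v => ?_⟩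
    rw [tfw_nil]
    have hz := Finset.sum_eq_zero_iff.mp (Nat.le_zero.mp hμ)
    simp only [id_eq]
    split_ifs with hv
    · have := hz v.val (Finset.mem_range.mpr hv)
      have := h1 v.val hv
      omega
    · rfl
  | succ k ih =>
    intro g hμ h1 h3
    by_cases hid : ∀ v < n - 1, g v = v
    · refine ⟨[], fun v => ?_⟩
      rw [tfw_nil]
      simp only [id_eq]
      split_ifs with hv
      · exact (hid _ hv).symm
      · rfl
    · push_neg at hid
      obtain ⟨v₀, hv₀, hgv₀⟩ := hid
      have hP : ∃ j, j + 1 < n - 1 ∧ g j = g (j + 1) := by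
        by_contra hnm
        push_neg at hnm
        have key : ∀ d v, v < n - 1 → v ≤ d → v ≤ g v := by
          intro d
          induction d with
          | zero => intro v hv hd; omega
          | succ d ihd =>
            intro v hv hd
            by_cases hv0 : v = 0
            · omega
            · have h5 := ihd (v - 1) (by omega) (by omega)
              have h6 := hnm (v - 1) (by omega)
              have h7 := h3 (v - 1) v (by omega) hv
              rw [show v - 1 + 1 = v by omega] at h6
              omega
        have := key v₀ v₀ hv₀ le_rfl
        have := h1 v₀ hv₀
        omega
      classical
      set Q : ℕ → Prop := fun j => j + 1 < n - 1 ∧ g j = g (j + 1) with hQ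
      obtain ⟨j₀, hj₀⟩ := hP
      have hj₀n : j₀ ≤ n := by omega
      set j := Nat.findGreatest Q n with hjdef
      have hQj : Q j := Nat.findGreatest_spec hj₀n hj₀
      obtain ⟨hj1, hj2⟩ := hQj
      set q : ℕ := if j + 2 < n - 1 then g (j + 2) else j + 1 with hq
      set g' : ℕ → ℕ := fun w => if w = j + 1 then min (j + 1) q else g w with hg'
      have hgj : g (j + 1) < j + 1 := by have := h1 j (by omega); omega
      have hqgt : g (j + 1) < q := by
        rw [hq]; split_ifs with h2
        · have hle := h3 (j + 1) (j + 2) (by omega) h2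
          rcases lt_or_eq_of_le hle with h | h
          · exact h
          · exfalso
            refine Nat.findGreatest_is_greatest (show j < j + 1 by omega) (by omega) ?_
            exact ⟨h2, h⟩
        · omega
      have h1' : ∀ v, v < n - 1 → g' v ≤ v := by
        intro v hv; simp only [hg']
        split_ifs with he
        · omega
        · exact h1 v hv
      have h3' : ∀ v w, v ≤ w → w < n - 1 → g' v ≤ g' w := by
        intro v w hvw hw; simp only [hg']
        split_ifs with he hf hf
        · exact le_rfl
        · -- v = j+1 < w
          subst he
          have h2 : j + 2 < n - 1 := by omega
          have hg2 : g (j + 2) ≤ g w := h3 (j + 2) w (by omega) hw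
          rw [hq]; rw [if_pos h2]; omega
        · -- v < w = j+1
          subst hf
          have : g v ≤ g j := h3 v j (by omega) (by omega)
          omega
        · exact h3 v w hvw hw
      have hlt : (∑ v ∈ Finset.range (n - 1), (v - g' v)) < ∑ v ∈ Finset.range (n - 1), (v - g v) := by
        apply Finset.sum_lt_sum
        · intro i _
          simp only [hg']
          split_ifs with he
          · subst he; omega
          · exact le_rfl
        · refine ⟨j + 1, Finset.mem_range.mpr (by omega), ?_⟩
          simp only [hg', if_true]
          omega
      obtain ⟨wd', hwd'⟩ := ih g' (by omega) h1' h3'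
      refine ⟨wD hn j ++ wd', fun v => ?_⟩
      rw [tfw_append, Function.comp_apply, tfw_wD hn j hj1, hwd' (df n j v)]
      have hvlt := v.isLt
      by_cases hc : v.val = j + 1
      · have hdv : (df n j v).val = j := by rw [val_df, if_pos ⟨hc, hj1⟩]
        rw [hdv, if_pos (by omega)]
        simp only [hg']
        rw [if_neg (by omega), if_pos (by omega), hc]
        exact hj2
      · have hdv : (df n j v).val = v.val := by
          rw [val_df, if_neg (by intro hx; exact hc hx.1)]
        rw [hdv]
        simp only [hg']
        split_ifs <;> omega

/-- value-level formulation of membership in `CM`. -/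
def CMP (n : ℕ) (t : Fin n → Fin n) : Prop :=
  (∀ v : Fin n, ¬ v.val < n - 1 → t v = v) ∧
  ∀ v w : Fin n, v.val ≤ w.val → w.val < n - 1 →
    (t v).val < n - 1 → (t w).val < n - 1 → (t v).val ≤ (t w).val

lemma CMP_id : CMP n id := ⟨fun _ _ => rfl, fun _ _ h _ _ _ => h⟩

lemma CMP_comp {t s : Fin n → Fin n} (ht : CMP n t) (hs : CMP n s) : CMP n (t ∘ s) := by
  constructor
  · intro v hv
    simp only [Function.comp_apply, hs.1 v hv, ht.1 v hv]
  · intro v w hvw hw h1 h2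
    simp only [Function.comp_apply] at *
    have hsv : (s v).val < n - 1 := by
      by_contra hc
      rw [ht.1 _ hc] at h1
      exact hc h1
    have hsw : (s w).val < n - 1 := by
      by_contra hc
      rw [ht.1 _ hc] at h2
      exact hc h2
    exact ht.2 (s v) (s w) (hs.2 v w hvw hw hsv hsw) hsw h1 h2

lemma CMP_cf (i : ℕ) : CMP n (cf n i) := by
  constructor
  · intro v hv
    have := v.isLt
    apply Fin.ext
    rw [val_cf]
    split_ifs <;> omega
  · intro v w hvw hw h1 h2
    have hv' := v.isLt
    simp only [val_cf] at *
    split_ifs at * <;> omega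

lemma CMP_uf (i : ℕ) : CMP n (uf n i) := by
  constructor
  · intro v hv
    have := v.isLt
    apply Fin.ext
    rw [val_uf]
    split_ifs <;> omega
  · intro v w hvw hw h1 h2
    have hv' := v.isLt
    simp only [val_uf] at *
    split_ifs at * <;> omega

lemma CMP_step (hn : 2 ≤ n) (a : Fin (2 * n - 2)) :
    CMP n (fun q => (M n hn).step q a) := by
  show CMP n (fun q => if a.val < n - 1 then cf n a.val q else uf n (a.val - (n - 1)) q)
  by_cases ha : a.val < n - 1
  · simp only [if_pos ha]; exact CMP_cf a.val
  · simp only [if_neg ha]; exact CMP_uf _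

lemma CMP_tfw (hn : 2 ≤ n) (w : List (Fin (2 * n - 2))) : CMP n (tfw hn w) := by
  induction w using List.reverseRecOn with
  | nil => rw [tfw_nil]; exact CMP_id
  | append_singleton w a ih =>
    rw [tfw_append]
    have : tfw hn [a] = fun q => (M n hn).step q a := rfl
    rw [this]
    exact CMP_comp (CMP_step hn a) ih

lemma gen_of_CMP (hn : 2 ≤ n) (t : Fin n → Fin n) (ht : CMP n t) :
    ∃ w : List (Fin (2 * n - 2)), w ≠ [] ∧ tfw hn w = t := by
  classical
  -- the list of dead (killed) values
  set L : List ℕ :=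
    ((List.finRange n).filter (fun v => decide (v.val < n - 1 ∧ (t v).val = n - 1))).map
      Fin.val with hLdef
  have le_sup' : ∀ (s : Finset (Fin n)) (f : Fin n → ℕ) (b : Fin n), b ∈ s → f b ≤ s.sup f :=
    fun s f b hb => Finset.le_sup hb
  have hLmem : ∀ v : Fin n, (v.val ∈ L ↔ (v.val < n - 1 ∧ (t v).val = n - 1)) := by
    intro v
    rw [hLdef]
    constructor
    · intro hx
      obtain ⟨u, hu, huv⟩ := List.mem_map.mp hx
      have := List.mem_filter.mp hu
      have hu2 := of_decide_eq_true this.2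
      have : u = v := Fin.ext huv
      subst this
      exact hu2
    · intro hx
      exact List.mem_map.mpr ⟨v, List.mem_filter.mpr ⟨List.mem_finRange v,
        decide_eq_true hx⟩, rfl⟩
  have hLlt : ∀ x ∈ L, x < n - 1 := by
    intro x hx
    rw [hLdef] at hx
    obtain ⟨u, hu, huv⟩ := List.mem_map.mp hx
    have := of_decide_eq_true (List.mem_filter.mp hu).2
    omega
  -- the monotone extension of t on live values
  set fval : ℕ → ℕ := fun x =>
    (Finset.univ.filter (fun d : Fin n => d.val < n - 1 ∧ (t d).val < n - 1 ∧ d.val ≤ x)).sup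
      (fun d => (t d).val) with hfval
  have hfle : ∀ x, fval x ≤ n - 2 := by
    intro x
    apply Finset.sup_le
    intro d hd
    rw [Finset.mem_filter] at hd
    omega
  have hfmono : ∀ x y, x ≤ y → fval x ≤ fval y := by
    intro x y hxy
    apply Finset.sup_mono
    intro d hd
    rw [Finset.mem_filter] at *
    exact ⟨hd.1, hd.2.1, hd.2.2.1, le_trans hd.2.2.2 hxy⟩
  have hfeq : ∀ d : Fin n, d.val < n - 1 → (t d).val < n - 1 → fval d.val = (t d).val := by
    intro d hd1 hd2
    apply le_antisymm
    · apply Finset.sup_le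
      intro d' hd'
      rw [Finset.mem_filter] at hd'
      exact ht.2 d' d hd'.2.2.2 hd1 hd'.2.2.1 hd2
    · simp only [hfval]
      exact le_sup' _ (fun d => (t d).val) d
        (by rw [Finset.mem_filter]; exact ⟨Finset.mem_univ d, hd1, hd2, le_rfl⟩)
  -- the up part
  set gu : ℕ → ℕ := fun x => min (n - 2) (max x (fval x)) with hgu
  obtain ⟨wH, hwH⟩ := up_gen hn (∑ v ∈ Finset.range (n - 1), (gu v - v)) gu le_rfl
    (fun v hv => by have := hfle v; simp only [hgu]; omega)
    (fun v w hvw hw => by have := hfmono v w hvw; simp only [hgu]; omega)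
  -- the down part
  set lval : ℕ → ℕ := fun x =>
    (Finset.univ.filter (fun u : Fin n => u.val < n - 1 ∧ gu u.val ≤ x)).sup
      (fun u => fval u.val) with hlval
  have hlle : ∀ x, x < n - 1 → lval x ≤ x := by
    intro x hx
    apply Finset.sup_le
    intro u hu
    rw [Finset.mem_filter] at hu
    have h1 := hfle u.val
    have := hu.2.2
    simp only [hgu] at this
    omega
  have hlmono : ∀ x y, x ≤ y → lval x ≤ lval y := by
    intro x y hxy
    apply Finset.sup_mono
    intro u hu
    rw [Finset.mem_filter] at *
    exact ⟨hu.1, hu.2.1, le_trans hu.2.2 hxy⟩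
  obtain ⟨wL, hwL⟩ := down_gen hn (∑ v ∈ Finset.range (n - 1), (v - lval v)) lval le_rfl
    hlle (fun v w hvw hw => hlmono v w hvw)
  -- assemble
  refine ⟨uL hn (n - 2) :: (wKill hn L ++ (wH ++ wL)), by simp, ?_⟩
  funext v
  have hvlt := v.isLt
  have hid : (M n hn).step v (uL hn (n - 2)) = v := by
    rw [step_uL, uf_id hn (n - 2) (by omega)]; rfl
  rw [tfw_cons, hid, tfw_append, Function.comp_apply, tfw_append, Function.comp_apply,
    tfw_wKill hn L hLlt]
  apply Fin.ext
  by_cases hv : v.val < n - 1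
  · by_cases hdead : (t v).val = n - 1
    · -- dead value
      have hA : (kf n L v).val = n - 1 := by
        rw [val_kf, if_pos ⟨(hLmem v).mpr ⟨hv, hdead⟩, hv⟩]
      have hB := hwH (kf n L v)
      rw [hA, if_neg (by omega)] at hB
      have hC := hwL (tfw hn wH (kf n L v))
      rw [hB, if_neg (by omega)] at hC
      rw [hC, hdead]
    · -- live value
      have hlive : (t v).val < n - 1 := by omega
      have hA : (kf n L v).val = v.val := by
        rw [val_kf, if_neg (by
          rintro ⟨hm, -⟩
          exact hdead ((hLmem v).mp hm).2)]
      have hB := hwH (kf n L v)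
      rw [hA, if_pos hv] at hB
      have hgulive : gu v.val < n - 1 := by simp only [hgu]; omega
      have hC := hwL (tfw hn wH (kf n L v))
      rw [hB, if_pos hgulive] at hC
      rw [hC]
      -- it remains: lval (gu v.val) = (t v).val
      have hfv := hfeq v hv hlive
      apply le_antisymm
      · simp only [hlval]
        apply Finset.sup_le
        intro u hu
        rw [Finset.mem_filter] at hu
        obtain ⟨-, hu1, hu2⟩ := hu
        rcases le_or_gt u.val v.val with hle | hlt
        · have := hfmono u.val v.val hle
          omega
        · -- u.val > v.val : fval u.val ≤ gu u.val ≤ gu v.val = fval v.val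
          have h1 := hfle u.val
          have h2 := hfle v.val
          simp only [hgu] at hu2
          omega
      · have : fval v.val ≤ lval (gu v.val) := by
          simp only [hlval]
          exact le_sup' _ (fun u => fval u.val) v
            (by rw [Finset.mem_filter]; exact ⟨Finset.mem_univ v, hv, le_rfl⟩)
        omega
  · -- v = T
    have hfix := ht.1 v hv
    have hA : (kf n L v).val = v.val := by
      rw [val_kf, if_neg (by rintro ⟨-, h⟩; omega)]
    have hB := hwH (kf n L v)
    rw [hA, if_neg hv] at hB
    have hC := hwL (tfw hn wH (kf n L v))
    rw [hB, if_neg hv] at hC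
    rw [hC, hfix]

/-- the set of live (non-killed) points of a completed transformation -/
def liveSet (n : ℕ) (t : Fin n → Fin n) : Finset (Fin (n - 1)) :=
  Finset.univ.filter (fun i => (t (Fin.castLE (Nat.sub_le n 1) i)).val < n - 1)

lemma mem_liveSet {t : Fin n → Fin n} {i : Fin (n - 1)} :
    i ∈ liveSet n t ↔ (t (Fin.castLE (Nat.sub_le n 1) i)).val < n - 1 := by
  classical
  simp [liveSet]

/-- reconstruct a completed transformation from (live set, monotone map) -/
def jfun (n k : ℕ) (hn : 2 ≤ n) (D : Finset (Fin (n - 1))) (hD : D.card = k)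
    (g : Fin k → Fin (n - 1)) : Fin n → Fin n := fun v =>
  if hv : v.val < n - 1 then
    (if hDv : (⟨v.val, hv⟩ : Fin (n - 1)) ∈ D then
      Fin.castLE (Nat.sub_le n 1) (g ((D.orderIsoOfFin hD).symm ⟨⟨v.val, hv⟩, hDv⟩))
    else ⟨n - 1, by omega⟩)
  else v

lemma jfun_apply_lt (hn : 2 ≤ n) {k : ℕ} (D : Finset (Fin (n - 1))) (hD : D.card = k)
    (g : Fin k → Fin (n - 1)) (v : Fin n) (hv : v.val < n - 1)
    (hDv : (⟨v.val, hv⟩ : Fin (n - 1)) ∈ D) :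
    jfun n k hn D hD g v
      = Fin.castLE (Nat.sub_le n 1) (g ((D.orderIsoOfFin hD).symm ⟨⟨v.val, hv⟩, hDv⟩)) := by
  rw [jfun, dif_pos hv, dif_pos hDv]

lemma jfun_apply_dead (hn : 2 ≤ n) {k : ℕ} (D : Finset (Fin (n - 1))) (hD : D.card = k)
    (g : Fin k → Fin (n - 1)) (v : Fin n) (hv : v.val < n - 1)
    (hDv : ¬ (⟨v.val, hv⟩ : Fin (n - 1)) ∈ D) :
    jfun n k hn D hD g v = ⟨n - 1, by omega⟩ := by
  rw [jfun, dif_pos hv, dif_neg hDv]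

lemma jfun_apply_top (hn : 2 ≤ n) {k : ℕ} (D : Finset (Fin (n - 1))) (hD : D.card = k)
    (g : Fin k → Fin (n - 1)) (v : Fin n) (hv : ¬ v.val < n - 1) :
    jfun n k hn D hD g v = v := by
  rw [jfun, dif_neg hv]

lemma liveSet_jfun (hn : 2 ≤ n) {k : ℕ} (D : Finset (Fin (n - 1))) (hD : D.card = k)
    (g : Fin k → Fin (n - 1)) : liveSet n (jfun n k hn D hD g) = D := by
  ext i
  rw [mem_liveSet]
  have hv : (Fin.castLE (Nat.sub_le n 1) i).val < n - 1 := i.isLt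
  have heq : (⟨(Fin.castLE (Nat.sub_le n 1) i).val, hv⟩ : Fin (n - 1)) = i := Fin.ext rfl
  by_cases hDi : i ∈ D
  · rw [jfun_apply_lt hn D hD g _ hv (by rw [heq]; exact hDi)]
    exact iff_of_true (g _).isLt hDi
  · rw [jfun_apply_dead hn D hD g _ hv (by rw [heq]; exact hDi)]
    exact iff_of_false (by simp) hDi

lemma CMP_jfun (hn : 2 ≤ n) {k : ℕ} (D : Finset (Fin (n - 1))) (hD : D.card = k)
    (g : Fin k → Fin (n - 1)) (hg : Monotone g) : CMP n (jfun n k hn D hD g) := by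
  constructor
  · intro v hv; exact jfun_apply_top hn D hD g v hv
  · intro v w hvw hw hv' hw'
    have hvlt : v.val < n - 1 := by omega
    by_cases hDv : (⟨v.val, hvlt⟩ : Fin (n - 1)) ∈ D
    · by_cases hDw : (⟨w.val, hw⟩ : Fin (n - 1)) ∈ D
      · rw [jfun_apply_lt hn D hD g v hvlt hDv, jfun_apply_lt hn D hD g w hw hDw]
        simp only [Fin.coe_castLE]
        have hsub : (⟨⟨v.val, hvlt⟩, hDv⟩ : {x // x ∈ D}) ≤ ⟨⟨w.val, hw⟩, hDw⟩ :=
          Subtype.mk_le_mk.mpr (Fin.mk_le_mk.mpr hvw)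
        have := hg ((D.orderIsoOfFin hD).symm.monotone hsub)
        exact this
      · rw [jfun_apply_dead hn D hD g w hw hDw] at hw'
        simp at hw'
    · rw [jfun_apply_dead hn D hD g v hvlt hDv] at hv'
      simp at hv'

/-- the monotone map associated to a completed transformation -/
def ifun (n k : ℕ) (hn : 2 ≤ n) (t : Fin n → Fin n) (hc : (liveSet n t).card = k) :
    Fin k → Fin (n - 1) := fun jj =>
  ⟨min (n - 2) ((t (Fin.castLE (Nat.sub_le n 1) ((liveSet n t).orderEmbOfFin hc jj))).val),
    by omega⟩

lemma orderEmbOfFin_congr {α : Type*} [LinearOrder α] {s t : Finset α} (h : s = t) {k : ℕ}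
    (hs : s.card = k) (jj : Fin k) :
    s.orderEmbOfFin hs jj = t.orderEmbOfFin (h ▸ hs) jj := by subst h; rfl

open Classical in
lemma card_CMP_aux (hn : 2 ≤ n) (k : ℕ) :
    (((Finset.univ.filter (fun t : Fin n → Fin n => CMP n t)).filter
        (fun t => (liveSet n t).card = k)).card : ℕ)
      = ((Finset.powersetCard k (Finset.univ : Finset (Fin (n - 1)))) ×ˢ
          (Finset.univ.filter (fun g : Fin k → Fin (n - 1) => Monotone g))).card := by
  classical
  refine Finset.card_bij'
    (i := fun t ht => (liveSet n t, ifun n k hn t (Finset.mem_filter.mp ht).2))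
    (j := fun p hp => jfun n k hn p.1
      (Finset.mem_powersetCard.mp (Finset.mem_product.mp hp).1).2 p.2)
    ?_ ?_ ?_ ?_
  · -- i lands in target
    intro t ht
    have hCMP : CMP n t := (Finset.mem_filter.mp (Finset.mem_filter.mp ht).1).2
    have hc : (liveSet n t).card = k := (Finset.mem_filter.mp ht).2
    rw [Finset.mem_product]
    constructor
    · rw [Finset.mem_powersetCard]
      exact ⟨Finset.subset_univ _, hc⟩
    · rw [Finset.mem_filter]
      refine ⟨Finset.mem_univ _, ?_⟩
      intro a b hab
      have hma := (mem_liveSet).mp (Finset.orderEmbOfFin_mem (liveSet n t) hc a)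
      have hmb := (mem_liveSet).mp (Finset.orderEmbOfFin_mem (liveSet n t) hc b)
      have hE : ((liveSet n t).orderEmbOfFin hc a).val
          ≤ ((liveSet n t).orderEmbOfFin hc b).val :=
        ((liveSet n t).orderEmbOfFin hc).monotone hab
      have := hCMP.2 (Fin.castLE (Nat.sub_le n 1) ((liveSet n t).orderEmbOfFin hc a))
        (Fin.castLE (Nat.sub_le n 1) ((liveSet n t).orderEmbOfFin hc b))
        (by simpa using hE) (by simpa using ((liveSet n t).orderEmbOfFin hc b).isLt)
        hma hmb
      simp only [ifun]
      exact Fin.mk_le_mk.mpr (by omega)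
  · -- j lands in source
    intro p hp
    have hD := (Finset.mem_powersetCard.mp (Finset.mem_product.mp hp).1).2
    have hg : Monotone p.2 := (Finset.mem_filter.mp (Finset.mem_product.mp hp).2).2
    rw [Finset.mem_filter, Finset.mem_filter]
    exact ⟨⟨Finset.mem_univ _, CMP_jfun hn p.1 hD p.2 hg⟩,
      by rw [liveSet_jfun hn p.1 hD p.2]; exact hD⟩
  · -- left inverse
    intro t ht
    have hCMP : CMP n t := (Finset.mem_filter.mp (Finset.mem_filter.mp ht).1).2
    have hc : (liveSet n t).card = k := (Finset.mem_filter.mp ht).2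
    funext v
    show jfun n k hn (liveSet n t) hc (ifun n k hn t hc) v = t v
    by_cases hv : v.val < n - 1
    · have hcast : Fin.castLE (Nat.sub_le n 1) (⟨v.val, hv⟩ : Fin (n - 1)) = v := Fin.ext rfl
      by_cases hDv : (⟨v.val, hv⟩ : Fin (n - 1)) ∈ liveSet n t
      · rw [jfun_apply_lt hn _ _ _ v hv hDv]
        have hE : (liveSet n t).orderEmbOfFin hc
            (((liveSet n t).orderIsoOfFin hc).symm ⟨⟨v.val, hv⟩, hDv⟩) = ⟨v.val, hv⟩ := by
          rw [← Finset.coe_orderIsoOfFin_apply, OrderIso.apply_symm_apply]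
        have hlive : (t v).val < n - 1 := by
          have := (mem_liveSet).mp hDv
          rwa [hcast] at this
        apply Fin.ext
        simp only [ifun, hE, Fin.coe_castLE, hcast]
        omega
      · rw [jfun_apply_dead hn _ _ _ v hv hDv]
        have hdead : ¬ (t v).val < n - 1 := by
          intro hcon
          exact hDv ((mem_liveSet).mpr (by rwa [hcast]))
        have := (t v).isLt
        apply Fin.ext
        show n - 1 = (t v).val
        omega
    · rw [jfun_apply_top hn _ _ _ v hv]
      exact (hCMP.1 v hv).symm
  · -- right inverse
    intro p hp
    obtain ⟨D, g⟩ := p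
    have hD := (Finset.mem_powersetCard.mp (Finset.mem_product.mp hp).1).2
    have hg : Monotone g := (Finset.mem_filter.mp (Finset.mem_product.mp hp).2).2
    have hlive : liveSet n (jfun n k hn D hD g) = D := liveSet_jfun hn D hD g
    refine Prod.ext hlive ?_
    have hc' : (liveSet n (jfun n k hn D hD g)).card = k := by rw [hlive]; exact hD
    funext jj
    apply Fin.ext
    show min (n - 2) ((jfun n k hn D hD g) (Fin.castLE (Nat.sub_le n 1)
        ((liveSet n (jfun n k hn D hD g)).orderEmbOfFin hc' jj))).val = (g jj).val
    have hcongr := orderEmbOfFin_congr hlive hc' jj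
    rw [hcongr]
    set E := D.orderEmbOfFin (hlive ▸ hc') jj with hEdef
    have hv : (Fin.castLE (Nat.sub_le n 1) E).val < n - 1 := E.isLt
    have heq : (⟨(Fin.castLE (Nat.sub_le n 1) E).val, hv⟩ : Fin (n - 1)) = E := Fin.ext rfl
    have hmem : (⟨(Fin.castLE (Nat.sub_le n 1) E).val, hv⟩ : Fin (n - 1)) ∈ D := by
      rw [heq, hEdef]
      exact Finset.orderEmbOfFin_mem D _ jj
    rw [jfun_apply_lt hn D hD g _ hv hmem]
    have hsub : (⟨⟨(Fin.castLE (Nat.sub_le n 1) E).val, hv⟩, hmem⟩ : {x // x ∈ D})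
        = (D.orderIsoOfFin hD) jj := by
      apply Subtype.ext
      rw [Finset.coe_orderIsoOfFin_apply]
      show (⟨(Fin.castLE (Nat.sub_le n 1) E).val, hv⟩ : Fin (n - 1)) = D.orderEmbOfFin hD jj
      rw [heq, hEdef]
    rw [hsub, OrderIso.symm_apply_apply]
    simp only [Fin.coe_castLE]
    have := (g jj).isLt
    omega

lemma smono_step {k : ℕ} (E : Fin k → ℕ) (hE : ∀ a b : Fin k, a.val < b.val → E a < E b) :
    ∀ (d : ℕ) (a b : Fin k), a.val + d = b.val → E a + d ≤ E b := by
  intro d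
  induction d with
  | zero =>
    intro a b h
    have : a = b := Fin.ext (by omega)
    subst this; omega
  | succ d ih =>
    intro a b h
    have hb := b.isLt
    have h1 := ih a ⟨b.val - 1, by omega⟩ (by show a.val + d = b.val - 1; omega)
    have h2 := hE ⟨b.val - 1, by omega⟩ b (by show b.val - 1 < b.val; omega)
    omega

lemma card_monotone_fin (m k : ℕ) (hm : 1 ≤ m) :
    (Finset.univ.filter (fun f : Fin k → Fin m => Monotone f)).card
      = (m + k - 1).choose k := by
  classical
  have htarget : (Finset.powersetCard k (Finset.univ : Finset (Fin (m + k - 1)))).card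
      = (m + k - 1).choose k := by
    rw [Finset.card_powersetCard, Finset.card_univ, Fintype.card_fin]
  rw [← htarget]
  refine Finset.card_bij'
    (i := fun f _ => Finset.image
      (fun j : Fin k => (⟨(f j).val + j.val, by
        have := (f j).isLt; have := j.isLt; omega⟩ : Fin (m + k - 1))) Finset.univ)
    (j := fun S hS => fun jj : Fin k =>
      (⟨(S.orderEmbOfFin (Finset.mem_powersetCard.mp hS).2 jj).val - jj.val, by
        have hc := (Finset.mem_powersetCard.mp hS).2
        have hE : ∀ a b : Fin k, a.val < b.val →
            (S.orderEmbOfFin hc a).val < (S.orderEmbOfFin hc b).val :=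
          fun a b hab => (S.orderEmbOfFin hc).strictMono hab
        have hk : 0 < k := by have := jj.isLt; omega
        have htop := smono_step _ hE (k - 1 - jj.val) jj ⟨k - 1, by omega⟩
          (by show jj.val + (k - 1 - jj.val) = k - 1; have := jj.isLt; omega)
        have hlt := (S.orderEmbOfFin hc ⟨k - 1, by omega⟩).isLt
        omega⟩ : Fin m))
    ?_ ?_ ?_ ?_
  · -- hi : image is in powersetCard
    intro f hf
    have hmono : Monotone f := (Finset.mem_filter.mp hf).2
    rw [Finset.mem_powersetCard]
    refine ⟨Finset.subset_univ _, ?_⟩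
    rw [Finset.card_image_of_injective _ ?_, Finset.card_univ, Fintype.card_fin]
    intro a b hab
    rw [Fin.mk.injEq] at hab
    by_contra hne
    rcases lt_trichotomy a.val b.val with h | h | h
    · have := hmono (le_of_lt (show a < b from h))
      rw [Fin.le_def] at this; omega
    · exact hne (Fin.ext h)
    · have := hmono (le_of_lt (show b < a from h))
      rw [Fin.le_def] at this; omega
  · -- hj : preimage is monotone
    intro S hS
    rw [Finset.mem_filter]
    refine ⟨Finset.mem_univ _, ?_⟩
    intro a b hab
    have hc := (Finset.mem_powersetCard.mp hS).2
    have hE : ∀ x y : Fin k, x.val < y.val →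
        (S.orderEmbOfFin hc x).val < (S.orderEmbOfFin hc y).val :=
      fun x y hxy => (S.orderEmbOfFin hc).strictMono hxy
    have hstep := smono_step _ hE (b.val - a.val) a b (by rw [Fin.le_def] at hab; omega)
    rw [Fin.mk_le_mk]
    rw [Fin.le_def] at hab
    omega
  · -- left inverse
    intro f hf
    have hmono : Monotone f := (Finset.mem_filter.mp hf).2
    have hstrict : StrictMono (fun j : Fin k => (⟨(f j).val + j.val, by
        have := (f j).isLt; have := j.isLt; omega⟩ : Fin (m + k - 1))) := by
      intro a b hab
      have h1 := hmono (le_of_lt hab)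
      rw [Fin.le_def] at h1
      rw [Fin.lt_def] at hab ⊢
      simp only
      omega
    have key : ∀ (hc : (Finset.image (fun j : Fin k => (⟨(f j).val + j.val, by
          have := (f j).isLt; have := j.isLt; omega⟩ : Fin (m + k - 1))) Finset.univ).card = k)
        (jj : Fin k),
        ((Finset.image (fun j : Fin k => (⟨(f j).val + j.val, by
          have := (f j).isLt; have := j.isLt; omega⟩ : Fin (m + k - 1))) Finset.univ).orderEmbOfFin
            hc jj) = ⟨(f jj).val + jj.val, by have := (f jj).isLt; have := jj.isLt; omega⟩ := by
      intro hc jj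
      rw [← Finset.orderEmbOfFin_unique hc
        (fun x => Finset.mem_image_of_mem _ (Finset.mem_univ x)) hstrict]
    funext jj
    apply Fin.ext
    simp only
    rw [key _ jj]
    show (f jj).val + jj.val - jj.val = (f jj).val
    omega
  · -- right inverse
    intro S hS
    have hc := (Finset.mem_powersetCard.mp hS).2
    have hE : ∀ x y : Fin k, x.val < y.val →
        (S.orderEmbOfFin hc x).val < (S.orderEmbOfFin hc y).val :=
      fun x y hxy => (S.orderEmbOfFin hc).strictMono hxy
    have hge : ∀ jj : Fin k, jj.val ≤ (S.orderEmbOfFin hc jj).val := by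
      intro jj
      have h0 : 0 < k := by have := jj.isLt; omega
      have := smono_step _ hE jj.val ⟨0, h0⟩ jj (by show 0 + jj.val = jj.val; omega)
      omega
    apply Finset.ext
    intro x
    simp only [Finset.mem_image, Finset.mem_univ, true_and]
    constructor
    · rintro ⟨jj, rfl⟩
      convert Finset.orderEmbOfFin_mem S hc jj using 2
      · have := hge jj
        first
          | (show (S.orderEmbOfFin hc jj).val - jj.val + jj.val = (S.orderEmbOfFin hc jj).val
             omega)
          | (show (S.orderEmbOfFin hc jj).val = (S.orderEmbOfFin hc jj).val - jj.val + jj.val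
             omega)
          | (apply Fin.ext
             show (S.orderEmbOfFin hc jj).val - jj.val + jj.val = (S.orderEmbOfFin hc jj).val
             omega)
          | (apply Fin.ext
             show (S.orderEmbOfFin hc jj).val = (S.orderEmbOfFin hc jj).val - jj.val + jj.val
             omega)
          | omega
    · intro hx
      have hxr : x ∈ Set.range (S.orderEmbOfFin hc) := by
        rw [Finset.range_orderEmbOfFin]
        exact hx
      obtain ⟨jj, hjj⟩ := hxr
      refine ⟨jj, ?_⟩
      apply Fin.ext
      simp only
      have := hge jj
      rw [← hjj]
      omega


open Classical in
lemma card_CMP (hn : 2 ≤ n) :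
    Nat.card {t : Fin n → Fin n | CMP n t} =
      ∑ k ∈ Finset.range n, (n - 1).choose k * (n + k - 2).choose k := by
  classical
  have hset : {t : Fin n → Fin n | CMP n t}
      = ↑(Finset.univ.filter (fun t : Fin n → Fin n => CMP n t)) := by
    ext t; simp
  rw [hset, Nat.card_coe_set_eq, Set.ncard_coe_finset]
  have hmap : ∀ t : Fin n → Fin n, t ∈ Finset.univ.filter (fun t => CMP n t) →
      (liveSet n t).card ∈ Finset.range n := by
    intro t _
    rw [Finset.mem_range]
    have h1 : (liveSet n t).card ≤ (Finset.univ : Finset (Fin (n - 1))).card :=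
      Finset.card_le_univ _
    have h2 : (Finset.univ : Finset (Fin (n - 1))).card = n - 1 := by simp
    omega
  rw [Finset.card_eq_sum_card_fiberwise hmap]
  apply Finset.sum_congr rfl
  intro k hk
  rw [card_CMP_aux hn k]
  rw [Finset.card_product, Finset.card_powersetCard, Finset.card_univ, Fintype.card_fin,
    card_monotone_fin (n - 1) k (by omega)]
  rw [show n - 1 + k - 1 = n + k - 2 from by omega]


lemma eval_range_map (hn : 2 ≤ n) :
    ∀ k (hk : k ≤ n - 2), (M n hn).evalFrom ⟨0, by omega⟩ ((List.range k).map (uL hn))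
      = ⟨k, by omega⟩ := by
  intro k
  induction k with
  | zero => intro _; rfl
  | succ k ih =>
    intro hk
    rw [List.range_succ, List.map_append, List.map_singleton, DFA.evalFrom_append_singleton,
      ih (by omega), step_uL]
    apply Fin.ext
    rw [val_uf, if_pos ⟨rfl, by omega⟩]

lemma eval_replicate_c0 (hn : 2 ≤ n) :
    ∀ (k : ℕ) (v : Fin n), v.val < n - 1 → k ≤ v.val →
      (M n hn).evalFrom v (List.replicate k (cL hn 0)) = ⟨v.val - k, by have := v.isLt; omega⟩ := by
  intro k
  induction k with
  | zero =>
    intro v _ _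
    apply Fin.ext
    show v.val = v.val - 0
    omega
  | succ k ih =>
    intro v hv hk
    rw [List.replicate_succ]
    have hstep : (M n hn).evalFrom v (cL hn 0 :: List.replicate k (cL hn 0))
        = (M n hn).evalFrom ((M n hn).step v (cL hn 0)) (List.replicate k (cL hn 0)) := rfl
    rw [hstep, step_cL hn 0 (by omega)]
    have hval : (cf n 0 v).val = v.val - 1 := by
      rw [val_cf, if_neg (by omega), if_pos (by omega)]
    have h1 : (cf n 0 v).val < n - 1 := by omega
    have h2 : k ≤ (cf n 0 v).val := by omega
    rw [ih (cf n 0 v) h1 h2]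
    apply Fin.ext
    simp only
    omega

lemma eval_replicate_c0_top (hn : 2 ≤ n) (v : Fin n) (hv : v.val = n - 1) :
    ∀ (k : ℕ), (M n hn).evalFrom v (List.replicate k (cL hn 0)) = v := by
  intro k
  induction k with
  | zero => rfl
  | succ k ih =>
    rw [List.replicate_succ]
    have hstep : (M n hn).evalFrom v (cL hn 0 :: List.replicate k (cL hn 0))
        = (M n hn).evalFrom ((M n hn).step v (cL hn 0)) (List.replicate k (cL hn 0)) := rfl
    have hfix : (M n hn).step v (cL hn 0) = v := by
      rw [step_cL hn 0 (by omega)]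
      apply Fin.ext
      rw [val_cf, if_neg (by omega), if_neg (by omega)]
    rw [hstep, hfix, ih]

lemma distinguish (hn : 2 ≤ n) (p q : Fin n) (hpq : p.val < q.val) :
    ∃ w : List (Fin (2 * n - 2)),
      (M n hn).evalFrom p w ∈ (M n hn).accept ∧ (M n hn).evalFrom q w ∉ (M n hn).accept := by
  have hq := q.isLt
  have hp : p.val < n - 1 := by omega
  refine ⟨List.replicate p.val (cL hn 0), ?_, ?_⟩
  · rw [eval_replicate_c0 hn p.val p hp le_rfl]
    show _ ∈ ({⟨0, by omega⟩} : Set (Fin n))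
    rw [Set.mem_singleton_iff]
    apply Fin.ext
    show p.val - p.val = 0
    omega
  · show ¬ _ ∈ ({⟨0, by omega⟩} : Set (Fin n))
    rw [Set.mem_singleton_iff]
    by_cases hqv : q.val < n - 1
    · rw [eval_replicate_c0 hn p.val q hqv (by omega)]
      intro hcon
      rw [Fin.mk.injEq] at hcon
      omega
    · have hqt : q.val = n - 1 := by omega
      rw [eval_replicate_c0_top hn q hqt]
      intro hcon
      have : q.val = 0 := by rw [hcon]
      omega

end PMDfa

/-- For every `n ≥ 2` there is a DFA over an alphabet of `2n-2` letters with
state set `Fin n` that is accessible, reduced, all of whose word transformations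
lie in the set `CM` of monotonic completed transformations of `Fin n` (with top
element `T = n-1` as sink), and whose transition semigroup (transformations
induced by non-empty words) has exactly `∑_{k=0}^{n-1} C(n-1,k)·C(n+k-2,k)`
elements. -/
theorem exists_partially_monotonic_dfa (n : ℕ) (hn : 2 ≤ n) :
    let T : Fin n := ⟨n - 1, by omega⟩
    let CM : Set (Fin n → Fin n) :=
      {t | t T = T ∧ ∀ i j : Fin n, i ≤ j → i < T → j < T →
        t i ≠ T → t j ≠ T → t i ≤ t j}
    ∃ M : DFA (Fin (2 * n - 2)) (Fin n),
      (∀ q : Fin n, ∃ w : List (Fin (2 * n - 2)), M.evalFrom M.start w = q) ∧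
      (∀ p q : Fin n, p ≠ q → ∃ w : List (Fin (2 * n - 2)),
        Xor' (M.evalFrom p w ∈ M.accept) (M.evalFrom q w ∈ M.accept)) ∧
      (∀ w : List (Fin (2 * n - 2)), (fun q => M.evalFrom q w) ∈ CM) ∧
      Nat.card {f : Fin n → Fin n |
          ∃ w : List (Fin (2 * n - 2)), w ≠ [] ∧ f = fun q => M.evalFrom q w} =
        ∑ k ∈ Finset.range n, Nat.choose (n - 1) k * Nat.choose (n + k - 2) k := by
  intro T CM
  have hiff : ∀ t : Fin n → Fin n, t ∈ CM ↔ PMDfa.CMP n t := by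
    intro t
    constructor
    · rintro ⟨h1, h2⟩
      constructor
      · intro v hv
        have hvv := v.isLt
        have : v = T := Fin.ext (by show v.val = n - 1; omega)
        rw [this, h1]
      · intro v w hvw hw htv htw
        have := h2 v w (Fin.le_def.mpr hvw)
          (Fin.lt_def.mpr (by show v.val < n - 1; omega))
          (Fin.lt_def.mpr (by show w.val < n - 1; omega))
          (by intro he; rw [he] at htv; exact lt_irrefl (n - 1) htv)
          (by intro he; rw [he] at htw; exact lt_irrefl (n - 1) htw)
        exact Fin.le_def.mp this
    · rintro ⟨hc1, hc2⟩
      constructor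
      · exact hc1 T (by show ¬ (n - 1 < n - 1); omega)
      · intro i j hij hiT hjT hti htj
        have hiv := (t i).isLt
        have hjv := (t j).isLt
        have h1 : (t i).val < n - 1 := by
          have : (t i).val ≠ n - 1 := fun h => hti (Fin.ext h)
          omega
        have h2 : (t j).val < n - 1 := by
          have : (t j).val ≠ n - 1 := fun h => htj (Fin.ext h)
          omega
        exact Fin.le_def.mpr (hc2 i j (Fin.le_def.mp hij) (Fin.lt_def.mp hjT) h1 h2)
  refine ⟨PMDfa.M n hn, ?_, ?_, ?_, ?_⟩
  · -- accessibility
    intro q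
    have hq := q.isLt
    by_cases hqv : q.val < n - 1
    · refine ⟨(List.range q.val).map (PMDfa.uL hn), ?_⟩
      have := PMDfa.eval_range_map hn q.val (by omega)
      rw [show (PMDfa.M n hn).start = ⟨0, by omega⟩ from rfl, this]
    · refine ⟨(List.range (n - 2)).map (PMDfa.uL hn) ++ [PMDfa.cL hn (n - 2)], ?_⟩
      rw [DFA.evalFrom_append_singleton,
        show (PMDfa.M n hn).start = ⟨0, by omega⟩ from rfl,
        PMDfa.eval_range_map hn (n - 2) le_rfl, PMDfa.step_cL hn (n - 2) (by omega)]
      apply Fin.ext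
      rw [PMDfa.val_cf, if_pos rfl]
      omega
  · -- distinguishability
    intro p q hpq
    rcases lt_trichotomy p.val q.val with h | h | h
    · obtain ⟨w, h1, h2⟩ := PMDfa.distinguish hn p q h
      exact ⟨w, Or.inl ⟨h1, h2⟩⟩
    · exact absurd (Fin.ext h) hpq
    · obtain ⟨w, h1, h2⟩ := PMDfa.distinguish hn q p h
      exact ⟨w, Or.inr ⟨h1, h2⟩⟩
  · -- all word transformations are in CM
    intro w
    exact (hiff _).mpr (PMDfa.CMP_tfw hn w)
  · -- cardinality of the transition semigroup
    have hseteq : {f : Fin n → Fin n |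
        ∃ w : List (Fin (2 * n - 2)), w ≠ [] ∧ f = fun q => (PMDfa.M n hn).evalFrom q w}
        = {t : Fin n → Fin n | PMDfa.CMP n t} := by
      ext f
      simp only [Set.mem_setOf_eq]
      constructor
      · rintro ⟨w, hw, rfl⟩
        exact PMDfa.CMP_tfw hn w
      · intro hf
        obtain ⟨w, hne, htw⟩ := PMDfa.gen_of_CMP hn f hf
        exact ⟨w, hne, htw.symm⟩
    rw [hseteq, PMDfa.card_CMP hn]
end
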